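/- arXiv:1103.4797 — 12 statements merged into one kernel-verified Lean document; each statement's English description precedes it below -/
import Mathlib

section
/- Let h(x) = x² and B_m = {(x,y) ∈ ℤ×ℤ : |x| ≤ m and |y| ≤ h(m−|x|)} with inner boundary ∂B_m. Then for every m ≥ 1 the harmonic measure ν_{m,o} of B_m is the uniform measure on ∂B_m; equivalently, for every z ∈ ∂B_m, every function ψ : B_m → ℝ that is harmonic at every vertex of B_m∖∂B_m and satisfies ψ(z) = 1 and ψ(w) = 0 for all w ∈ ∂B_m∖{z} has ψ(o) = 1/|∂B_m|. -/
/-!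
The function `G (x, y) = -((m - |x|)₊² - |y|)₊`, negative exactly on the interior of `B_m`,
has comb Laplacian `ΔG = 4m·δ_o - 1_{∂B_m}`. Along a tooth `G` is linear in `|y|` with a kink of
size `-1` at the top `|y| = (m - |x|)²`. At a backbone vertex the two tooth edges contribute `+2`,
which the second difference of the parabola `(m - |x|)²` cancels, except at `x = 0`, where the
apex of the parabola yields `4m`, and at `|x| = m`. Summation by parts against a function `ψ`
harmonic in the interior gives `∑_{∂B_m} ψ = 4m·ψ(o)`; for `ψ = 1` this says `|∂B_m| = 4m`.
-/

namespace Stmt1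

/-- Vertices of the comb `C₂`. -/
abbrev V := ℤ × ℤ

/-- The origin of the comb. -/
def o : V := (0, 0)

/-- The neighbours in `C₂` of a vertex: a backbone vertex `(x,0)` has the four
neighbours `(x±1,0)`, `(x,±1)`; a vertex `(x,y)` with `y ≠ 0` has the two
neighbours `(x,y±1)`. -/
def nbrs (v : V) : Finset V :=
  if v.2 = 0 then {(v.1 + 1, 0), (v.1 - 1, 0), (v.1, 1), (v.1, -1)}
  else {(v.1, v.2 + 1), (v.1, v.2 - 1)}

/-- The set `B_m = {(x,y) ∈ ℤ×ℤ : |x| ≤ m, |y| ≤ h(m - |x|)}`, as a `Finset`. -/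
noncomputable def Bfin (h : ℕ → ℕ) (m : ℕ) : Finset V :=
  ((Finset.Icc (-(m : ℤ)) (m : ℤ)) ×ˢ
      (Finset.Icc (-(((Finset.range (m + 1)).sup h : ℕ) : ℤ))
        (((Finset.range (m + 1)).sup h : ℕ) : ℤ))).filter
    (fun p => p.2.natAbs ≤ h (m - p.1.natAbs))

/-- The inner boundary `∂B_m`: points of `B_m` with a `C₂`-neighbour outside `B_m`. -/
noncomputable def bdry (h : ℕ → ℕ) (m : ℕ) : Finset V :=
  (Bfin h m).filter (fun z => ∃ y ∈ nbrs z, y ∉ Bfin h m)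

/-- `ψ` is harmonic (for simple random walk on `C₂`) at the vertex `v`:
the sum of `ψ` over the neighbours of `v` equals `deg v · ψ v`. -/
def HarmAt (ψ : V → ℝ) (v : V) : Prop :=
  ∑ y ∈ nbrs v, ψ y = ((nbrs v).card : ℝ) * ψ v

/-- `h x = x²`. -/
def sq (x : ℕ) : ℕ := x ^ 2

section Laplacian

variable {α R : Type*} [CommRing R] {N : α → Finset α}

def lap (N : α → Finset α) (f : α → R) (v : α) : R :=
  ∑ w ∈ N v, f w - (N v).card * f v

theorem lap_intCast (f : α → ℤ) (v : α) : lap N (fun w => (f w : R)) v = lap N f v := by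
  simp [lap]

variable [DecidableEq α]

theorem sum_sum_eq_sum_sum_ite_mem {S : Finset α} {F : α → α → R}
    (hF : ∀ v w, w ∈ N v → F v w ≠ 0 → w ∈ S) :
    ∑ v ∈ S, ∑ w ∈ N v, F v w = ∑ v ∈ S, ∑ w ∈ S, if w ∈ N v then F v w else 0 := by
  refine Finset.sum_congr rfl fun v _ => ?_
  rw [Finset.sum_ite_mem]
  refine (Finset.sum_subset Finset.inter_subset_right fun w hw hwS => ?_).symm
  by_contra hne
  exact hwS (Finset.mem_inter.2 ⟨hF v w hw hne, hw⟩)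

theorem sum_mul_lap_comm (hN : ∀ v w, w ∈ N v ↔ v ∈ N w) {S : Finset α} {f g : α → R}
    (hf : ∀ v, f v ≠ 0 → v ∈ S ∧ N v ⊆ S) :
    ∑ v ∈ S, f v * lap N g v = ∑ v ∈ S, g v * lap N f v := by
  have hcross : ∑ v ∈ S, f v * ∑ w ∈ N v, g w = ∑ v ∈ S, g v * ∑ w ∈ N v, f w := by
    simp_rw [Finset.mul_sum]
    rw [sum_sum_eq_sum_sum_ite_mem fun v w hw hne => (hf v (left_ne_zero_of_mul hne)).2 hw,
      sum_sum_eq_sum_sum_ite_mem fun v w _ hne => (hf w (right_ne_zero_of_mul hne)).1,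
      Finset.sum_comm]
    refine Finset.sum_congr rfl fun v _ => Finset.sum_congr rfl fun w _ => ?_
    simp only [hN w v, mul_comm]
  simp only [lap, mul_sub, Finset.sum_sub_distrib, hcross]
  congr 1
  exact Finset.sum_congr rfl fun v _ => by ring

end Laplacian

theorem harmAt_iff_lap_eq_zero {ψ : V → ℝ} {v : V} : HarmAt ψ v ↔ lap nbrs ψ v = 0 :=
  sub_eq_zero.symm

theorem mem_nbrs_comm {u v : V} : u ∈ nbrs v ↔ v ∈ nbrs u := by
  obtain ⟨a, b⟩ := u; obtain ⟨x, y⟩ := v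
  simp only [nbrs]
  split_ifs <;> simp only [Finset.mem_insert, Finset.mem_singleton, Prod.mk.injEq] <;> omega

section Stencils

variable {R : Type*} [CommRing R] (f : V → R)

theorem lap_backbone (x : ℤ) :
    lap nbrs f (x, 0) = f (x + 1, 0) + f (x - 1, 0) + f (x, 1) + f (x, -1) - 4 * f (x, 0) := by
  have h₁ : (x + 1, (0 : ℤ)) ∉ ({(x - 1, 0), (x, 1), (x, -1)} : Finset V) := by
    simp only [Finset.mem_insert, Finset.mem_singleton, Prod.mk.injEq]
    omega
  have h₂ : (x - 1, (0 : ℤ)) ∉ ({(x, 1), (x, -1)} : Finset V) := by simp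
  have h₃ : (x, (1 : ℤ)) ∉ ({(x, -1)} : Finset V) := by simp
  simp only [lap, nbrs, if_pos, Finset.sum_insert h₁, Finset.sum_insert h₂, Finset.sum_insert h₃,
    Finset.card_insert_of_notMem h₁, Finset.card_insert_of_notMem h₂,
    Finset.card_insert_of_notMem h₃, Finset.sum_singleton, Finset.card_singleton]
  push_cast
  ring

theorem lap_tooth {x y : ℤ} (hy : y ≠ 0) :
    lap nbrs f (x, y) = f (x, y + 1) + f (x, y - 1) - 2 * f (x, y) := by
  have h : (x, y + 1) ∉ ({(x, y - 1)} : Finset V) := by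
    simp only [Finset.mem_singleton, Prod.mk.injEq]
    omega
  simp only [lap, nbrs, if_neg hy, Finset.sum_insert h, Finset.card_insert_of_notMem h,
    Finset.sum_singleton, Finset.card_singleton]
  push_cast
  ring

end Stencils

theorem mem_Bfin {h : ℕ → ℕ} {m : ℕ} {x y : ℤ} :
    (x, y) ∈ Bfin h m ↔ x.natAbs ≤ m ∧ y.natAbs ≤ h (m - x.natAbs) := by
  simp only [Bfin, Finset.mem_filter, Finset.mem_product, Finset.mem_Icc]
  constructor
  · rintro ⟨⟨hx, -⟩, hy⟩
    exact ⟨by omega, hy⟩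
  · rintro ⟨hx, hy⟩
    have hsup : h (m - x.natAbs) ≤ (Finset.range (m + 1)).sup h :=
      Finset.le_sup (Finset.mem_range.2 (by omega))
    exact ⟨⟨by omega, by omega⟩, hy⟩

theorem bdry_subset_Bfin {h : ℕ → ℕ} {m : ℕ} : bdry h m ⊆ Bfin h m :=
  Finset.filter_subset _ _

theorem nbrs_subset_Bfin {h : ℕ → ℕ} {m : ℕ} {v : V} (hv : v ∈ Bfin h m) (hv' : v ∉ bdry h m) :
    nbrs v ⊆ Bfin h m := by
  intro w hw
  by_contra hwB
  exact hv' (Finset.mem_filter.2 ⟨hv, w, hw, hwB⟩)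

theorem sq_tsub_of_le {m n : ℕ} : m ≤ n → (m - n) ^ 2 = 0 := by
  intro h
  simp [Nat.sub_eq_zero_of_le h]

-- Stated with implications and a free `k` so that instances at `natAbs` terms can be handed
-- to `omega`, which treats the squares as atoms.
theorem sq_tsub_eq_of_lt {m n k : ℕ} :
    n < m → k = n + 1 → (m - n) ^ 2 = (m - k) ^ 2 + 2 * (m - k) + 1 := by
  rintro h rfl
  rw [show m - n = m - (n + 1) + 1 by omega]
  ring

theorem mem_bdry_sq_backbone {m : ℕ} {x : ℤ} : (x, 0) ∈ bdry sq m ↔ x.natAbs = m := by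
  have hzero := @sq_tsub_of_le m x.natAbs
  have hpos : x.natAbs < m → 0 < (m - x.natAbs) ^ 2 := fun h => pow_pos (Nat.sub_pos_of_lt h) 2
  rw [bdry, Finset.mem_filter]
  simp only [nbrs, ↓reduceIte, Finset.mem_insert, Finset.mem_singleton,
    exists_eq_or_imp, exists_eq_left, mem_Bfin, sq]
  omega

theorem mem_bdry_sq_tooth {m : ℕ} {x y : ℤ} (hy : y ≠ 0) :
    (x, y) ∈ bdry sq m ↔ y.natAbs = (m - x.natAbs) ^ 2 := by
  have hzero := @sq_tsub_of_le m x.natAbs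
  rw [bdry, Finset.mem_filter]
  simp only [nbrs, if_neg hy, Finset.mem_insert, Finset.mem_singleton,
    exists_eq_or_imp, exists_eq_left, mem_Bfin, sq]
  omega

-- Truncated subtraction makes `green m` vanish off the interior of `B_m`.
def green (m : ℕ) (v : V) : ℤ :=
  -((m - v.1.natAbs) ^ 2 - v.2.natAbs : ℕ)

theorem lap_green_backbone {m : ℕ} (hm : 1 ≤ m) (x : ℤ) :
    lap nbrs (green m) (x, 0) =
      (if x = 0 then 4 * (m : ℤ) else 0) - if x.natAbs = m then 1 else 0 := by
  rw [lap_backbone]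
  simp only [green, Int.natAbs_zero, Int.natAbs_one, Int.natAbs_neg]
  -- the parabola `n ↦ (m - n)²` has second difference `2` on `n < m`
  have := @sq_tsub_eq_of_lt m x.natAbs (x + 1).natAbs
  have := @sq_tsub_eq_of_lt m (x + 1).natAbs x.natAbs
  have := @sq_tsub_eq_of_lt m x.natAbs (x - 1).natAbs
  have := @sq_tsub_eq_of_lt m (x - 1).natAbs x.natAbs
  have := @sq_tsub_of_le m x.natAbs
  have := @sq_tsub_of_le m (x + 1).natAbs
  have := @sq_tsub_of_le m (x - 1).natAbs
  split_ifs <;> omega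

theorem lap_green_tooth {m : ℕ} {x y : ℤ} (hy : y ≠ 0) :
    lap nbrs (green m) (x, y) = -if y.natAbs = (m - x.natAbs) ^ 2 then 1 else 0 := by
  rw [lap_tooth _ hy]
  simp only [green]
  split_ifs <;> omega

theorem lap_green {m : ℕ} (hm : 1 ≤ m) (v : V) :
    lap nbrs (green m) v = (if v = o then 4 * (m : ℤ) else 0) - if v ∈ bdry sq m then 1 else 0 := by
  obtain ⟨x, y⟩ := v
  rcases eq_or_ne y 0 with rfl | hy
  · simp only [lap_green_backbone hm, mem_bdry_sq_backbone, o, Prod.mk.injEq, and_true]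
  · have hxy : (x, y) ≠ o := fun h => hy (congrArg Prod.snd h)
    simp only [lap_green_tooth hy, mem_bdry_sq_tooth hy, if_neg hxy, zero_sub]

theorem mem_interior_of_green_ne_zero {m : ℕ} {v : V} (hv : green m v ≠ 0) :
    v ∈ Bfin sq m ∧ v ∉ bdry sq m := by
  obtain ⟨x, y⟩ := v
  have hzero := @sq_tsub_of_le m x.natAbs
  simp only [green] at hv
  rcases eq_or_ne y 0 with rfl | hy
  · rw [mem_Bfin, mem_bdry_sq_backbone]
    simp only [Int.natAbs_zero, sq] at hv ⊢
    omega
  · rw [mem_Bfin, mem_bdry_sq_tooth hy]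
    simp only [sq]
    omega

theorem sum_bdry_eq_four_mul_apply_o {m : ℕ} (hm : 1 ≤ m) {ψ : V → ℝ}
    (hψ : ∀ v ∈ Bfin sq m, v ∉ bdry sq m → HarmAt ψ v) :
    ∑ w ∈ bdry sq m, ψ w = 4 * m * ψ o := by
  have hinterior (v : V) (hv : (green m v : ℝ) ≠ 0) : v ∈ Bfin sq m ∧ v ∉ bdry sq m :=
    mem_interior_of_green_ne_zero (by exact_mod_cast hv)
  have hgreen := sum_mul_lap_comm (N := nbrs) (g := ψ) (fun _ _ => mem_nbrs_comm) fun v hv =>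
    ⟨(hinterior v hv).1, nbrs_subset_Bfin (hinterior v hv).1 (hinterior v hv).2⟩
  have hlhs : ∑ v ∈ Bfin sq m, (green m v : ℝ) * lap nbrs ψ v = 0 := by
    refine Finset.sum_eq_zero fun v _ => ?_
    by_cases hv : (green m v : ℝ) = 0
    · rw [hv, zero_mul]
    · obtain ⟨hB, hbdry⟩ := hinterior v hv
      rw [harmAt_iff_lap_eq_zero.1 (hψ v hB hbdry), mul_zero]
  have ho : o ∈ Bfin sq m := mem_Bfin.2 (by simp)
  simp only [lap_intCast, lap_green hm] at hgreen
  push_cast at hgreen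
  simp only [mul_sub, mul_ite, mul_zero, mul_one, Finset.sum_sub_distrib, Finset.sum_ite_eq',
    if_pos ho, Finset.sum_ite_mem, Finset.inter_eq_right.2 bdry_subset_Bfin] at hgreen
  linarith

theorem card_bdry_sq {m : ℕ} (hm : 1 ≤ m) : (bdry sq m).card = 4 * m := by
  have h := sum_bdry_eq_four_mul_apply_o hm (ψ := fun _ => 1) fun v _ _ => by simp [HarmAt]
  simp only [Finset.sum_const, nsmul_eq_mul, mul_one] at h
  exact_mod_cast h

/-- **Theorem (uniform harmonic measure).** For `h x = x²` and every `m ≥ 1`, the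
harmonic measure of `B_m` from the origin is uniform on `∂B_m`: for every
`z ∈ ∂B_m`, every `ψ` harmonic at all vertices of `B_m ∖ ∂B_m` with `ψ z = 1` and
`ψ w = 0` for `w ∈ ∂B_m ∖ {z}` satisfies `ψ o = 1/|∂B_m|`. -/
theorem uniform_harmonic_measure (m : ℕ) (hm : 1 ≤ m) (z : V) (hz : z ∈ bdry sq m)
    (ψ : V → ℝ)
    (hharm : ∀ v ∈ Bfin sq m, v ∉ bdry sq m → HarmAt ψ v)
    (hψz : ψ z = 1)
    (hψ0 : ∀ w ∈ bdry sq m, w ≠ z → ψ w = 0) :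
    ψ o = 1 / ((bdry sq m).card : ℝ) := by
  have hsum : ∑ w ∈ bdry sq m, ψ w = 1 := by
    rw [Finset.sum_eq_single_of_mem z hz hψ0, hψz]
  have hmean := sum_bdry_eq_four_mul_apply_o hm hharm
  have hm0 : (0 : ℝ) < m := by exact_mod_cast hm
  rw [card_bdry_sq hm]
  push_cast
  field_simp
  linarith

end Stmt1
end

section
/- (Strong Abelian Property) Let G be a locally finite graph with a nonempty sink set S, G' = G∖S, an initial rotor configuration ρ₀ on G' and a particle configuration σ₀. Let u₁, u₂ : G' → ℕ be finitely supported, and write F^{u_i}(ρ₀, σ₀) = (ρ_i, σ_i) for i = 1, 2. If σ₁ = σ₂ on G', and both ρ₁ and ρ₂ are acyclic, then u₁ = u₂. -/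
/-!
**Strong Abelian Property** (Kager–Levine). Let `G` be a locally finite graph with
a nonempty sink set `S` and `G' = G ∖ S`, with a cyclic ordering of the neighbours
of each vertex.  Let `ρ₀` be a rotor configuration on `G'`, `σ₀` a particle
configuration, and `u₁, u₂ : G' → ℕ` finitely supported, with
`F^{u_i}(ρ₀, σ₀) = (ρ_i, σ_i)`.  If `σ₁ = σ₂` on `G'` and both `ρ₁, ρ₂` are
acyclic, then `u₁ = u₂`.
-/

namespace Stmt3

variable {V : Type*} [DecidableEq V]

/-- Advance the rotor at `x` currently pointing at `y`: if `y = x_i` in the cyclic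
ordering `c x` of the `deg x` neighbours of `x`, the rotor moves to
`x_{(i+1) mod deg x}`. -/
noncomputable def plus (G : SimpleGraph V) [G.LocallyFinite] (c : V → ℕ → V)
    (x y : V) : V :=
  if hi : ∃ i, i < G.degree x ∧ c x i = y then c x ((Nat.find hi + 1) % G.degree x)
  else y

/-- The number of particles sent from `x` to `y` when `x`, whose rotor initially
points at `ρx`, is toppled `n` times: the `k`-th toppling sends a particle to the
rotor direction after `k` advances. -/
noncomputable def sentCount (G : SimpleGraph V) [G.LocallyFinite] (c : V → ℕ → V)
    (x : V) (ρx : V) (n : ℕ) (y : V) : ℕ :=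
  ((Finset.range n).filter (fun k => (plus G c x)^[k + 1] ρx = y)).card

/-- `F^u (ρ, σ)`: the result of toppling each vertex `x` exactly `u x` times
(well defined by the abelian property).  The rotor at `x` is advanced `u x`
times, and each vertex `y` loses `u y` particles and receives one particle for
each toppling of a vertex `x` whose rotor then pointed at `y`. -/
noncomputable def Fpow (G : SimpleGraph V) [G.LocallyFinite] (c : V → ℕ → V)
    (u : V → ℕ) (ρ : V → V) (σ : V → ℤ) : (V → V) × (V → ℤ) :=
  (fun x => (plus G c x)^[u x] (ρ x),
   fun y => σ y - u y + ∑ᶠ x, (sentCount G c x (ρ x) (u x) y : ℤ))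

/-- A rotor configuration `ρ` is acyclic on the vertex set `A` if the directed
graph on `A` with edge set `{(x, ρ x) : x ∈ A}` contains no directed cycle. -/
def AcyclicOn (A : Set V) (ρ : V → V) : Prop :=
  ¬ ∃ (x : V) (n : ℕ), 0 < n ∧ (∀ i < n, ρ^[i] x ∈ A) ∧ ρ^[n] x = x

end Stmt3

/-!
Let `A` be the finite set of vertices toppled more often by `u₁` than by `u₂`; it avoids the
sinks. Counting particles, the net number of topplings at vertices of `A` equals the net number
of particles that vertices of `A` send into `A`, and a vertex of `A` sends at most one particle
per extra toppling. So every extra toppling of a vertex of `A` sends its particle into `A`, in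
particular the last one, which is where the final rotor points. Thus the final rotor
configuration maps the finite set `A` into itself and must contain a cycle unless `A` is empty.
-/

namespace Nat

theorem count_le_count_add_sub (p : ℕ → Prop) [DecidablePred p] (m n : ℕ) :
    count p n ≤ count p m + (n - m) := by
  rcases le_total n m with h | h
  · exact (count_monotone p h).trans (Nat.le_add_right _ _)
  · obtain ⟨k, rfl⟩ := Nat.exists_eq_add_of_le h
    rw [count_add, Nat.add_sub_cancel_left]
    exact Nat.add_le_add_left (count_le _) _

theorem count_lt_count_add_sub {p : ℕ → Prop} [DecidablePred p] {m n : ℕ} (hmn : m < n)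
    (hp : ¬ p (n - 1)) : count p n < count p m + (n - m) := by
  obtain ⟨k, rfl⟩ := Nat.exists_eq_add_of_lt hmn
  rw [Nat.add_sub_cancel] at hp
  have := count_le_count_add_sub p m (m + k)
  rw [count_succ, if_neg hp]
  omega

end Nat

namespace Stmt3

theorem AcyclicOn.eq_empty_of_mapsTo {V : Type*} {A B : Set V} {f : V → V}
    (hf : AcyclicOn A f) (hB : B.Finite) (hBA : B ⊆ A) (hfB : Set.MapsTo f B B) : B = ∅ := by
  refine Set.eq_empty_of_forall_notMem fun x hx => hf ?_
  have horbit : ∀ n, f^[n] x ∈ B := fun n => hfB.iterate n hx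
  obtain ⟨a, b, hab, heq⟩ := hB.exists_lt_map_eq_of_forall_mem horbit
  refine ⟨f^[a] x, b - a, by omega, fun i _ => hBA ?_, ?_⟩
  · rw [← Function.iterate_add_apply]
    exact horbit _
  · rw [← Function.iterate_add_apply, Nat.sub_add_cancel hab.le, heq]

variable {V : Type*} [DecidableEq V] (G : SimpleGraph V) [G.LocallyFinite] (c : V → ℕ → V)

theorem sum_sentCount (x ρx : V) (n : ℕ) (B : Finset V) :
    ∑ y ∈ B, sentCount G c x ρx n y = Nat.count (fun k => (plus G c x)^[k + 1] ρx ∈ B) n := by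
  rw [Nat.count_eq_card_filter_range, ← Finset.sum_card_fiberwise_eq_card_filter]
  rfl

theorem Fpow_snd_eq_sum {u : V → ℕ} {T : Finset V} (hT : Function.support u ⊆ T)
    (ρ : V → V) (σ : V → ℤ) (y : V) :
    (Fpow G c u ρ σ).2 y = σ y - u y + ∑ x ∈ T, (sentCount G c x (ρ x) (u x) y : ℤ) := by
  refine congrArg (σ y - u y + ·) (finsum_eq_finsetSum_of_support_subset _ fun x hx => hT ?_)
  rw [Function.mem_support] at hx ⊢
  contrapose! hx
  simp [hx, sentCount]

theorem sum_sub_eq_sum_count_sub {u₁ u₂ : V → ℕ} {T : Finset V}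
    (h₁ : Function.support u₁ ⊆ T) (h₂ : Function.support u₂ ⊆ T) (ρ : V → V) (σ : V → ℤ)
    (A : Finset V) (hσ : ∀ x ∈ A, (Fpow G c u₁ ρ σ).2 x = (Fpow G c u₂ ρ σ).2 x) :
    ∑ x ∈ A, ((u₁ x : ℤ) - u₂ x) =
      ∑ y ∈ T, ((Nat.count (fun k => (plus G c y)^[k + 1] (ρ y) ∈ A) (u₁ y) : ℤ) -
        Nat.count (fun k => (plus G c y)^[k + 1] (ρ y) ∈ A) (u₂ y)) := by
  have hbalance : ∀ x ∈ A, (u₁ x : ℤ) - u₂ x =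
      ∑ y ∈ T, ((sentCount G c y (ρ y) (u₁ y) x : ℤ) - sentCount G c y (ρ y) (u₂ y) x) := by
    intro x hx
    have h := hσ x hx
    rw [Fpow_snd_eq_sum G c h₁, Fpow_snd_eq_sum G c h₂] at h
    rw [Finset.sum_sub_distrib]
    linarith
  rw [Finset.sum_congr rfl hbalance, Finset.sum_comm]
  refine Finset.sum_congr rfl fun y _ => ?_
  rw [Finset.sum_sub_distrib, ← sum_sentCount, ← sum_sentCount]
  push_cast
  rfl

theorem le_of_Fpow_snd_eq_of_acyclicOn {S : Set V} {ρ : V → V} {σ : V → ℤ} {u₁ u₂ : V → ℕ}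
    (hu₁ : (Function.support u₁).Finite) (hu₂ : (Function.support u₂).Finite)
    (hu₁S : ∀ s ∈ S, u₁ s = 0)
    (hσ : ∀ x ∉ S, (Fpow G c u₁ ρ σ).2 x = (Fpow G c u₂ ρ σ).2 x)
    (hρ₁ : AcyclicOn Sᶜ (Fpow G c u₁ ρ σ).1) : u₁ ≤ u₂ := by
  set T := hu₁.toFinset ∪ hu₂.toFinset
  set A := T.filter fun x => u₂ x < u₁ x
  have hA : ∀ x, x ∈ A ↔ u₂ x < u₁ x := fun x => by
    simp only [A, T, Finset.mem_filter, Finset.mem_union, Set.Finite.mem_toFinset,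
      Function.mem_support]
    omega
  have hAS : (A : Set V) ⊆ Sᶜ := fun x hx hxS => by
    have := (hA x).1 hx
    have := hu₁S x hxS
    omega
  set sentIntoA : V → ℕ → ℕ := fun y =>
    Nat.count (fun k => (plus G c y)^[k + 1] (ρ y) ∈ A)
  have hbalance : ∑ x ∈ A, ((u₁ x : ℤ) - u₂ x) =
      ∑ y ∈ T, ((sentIntoA y (u₁ y) : ℤ) - sentIntoA y (u₂ y)) :=
    sum_sub_eq_sum_count_sub G c (by simp [T]) (by simp [T]) ρ σ A fun x hx => hσ x (hAS hx)
  have hexcess : ∑ y ∈ T, ((u₁ y - u₂ y : ℕ) : ℤ) = ∑ x ∈ A, ((u₁ x : ℤ) - u₂ x) := by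
    rw [Finset.sum_filter]
    refine Finset.sum_congr rfl fun y _ => ?_
    split_ifs <;> omega
  have hmaps : Set.MapsTo (Fpow G c u₁ ρ σ).1 A A := by
    intro y hy
    by_contra hρy
    have hlt_y := (hA y).1 hy
    have hlast : ¬ (plus G c y)^[u₁ y - 1 + 1] (ρ y) ∈ A := by
      rwa [Nat.sub_add_cancel (by omega)]
    have hlt : ∑ z ∈ T, ((sentIntoA z (u₁ z) : ℤ) - sentIntoA z (u₂ z)) <
        ∑ z ∈ T, ((u₁ z - u₂ z : ℕ) : ℤ) := by
      refine Finset.sum_lt_sum (fun z _ => ?_) ⟨y, Finset.mem_of_mem_filter y hy, ?_⟩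
      · have : sentIntoA z (u₁ z) ≤ sentIntoA z (u₂ z) + (u₁ z - u₂ z) :=
          Nat.count_le_count_add_sub _ _ _
        omega
      · have : sentIntoA y (u₁ y) < sentIntoA y (u₂ y) + (u₁ y - u₂ y) :=
          Nat.count_lt_count_add_sub hlt_y hlast
        omega
    linarith
  intro x
  by_contra hx
  have hAempty : (A : Set V) = ∅ := hρ₁.eq_empty_of_mapsTo A.finite_toSet hAS hmaps
  exact Set.eq_empty_iff_forall_notMem.1 hAempty x ((hA x).2 (not_le.1 hx))

theorem strong_abelian_property_general (G : SimpleGraph V) [G.LocallyFinite]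
    (c : V → ℕ → V)
    (S : Set V)
    (ρ₀ : V → V)
    (σ₀ : V → ℤ)
    (u₁ u₂ : V → ℕ)
    (hu₁fin : (Function.support u₁).Finite) (hu₂fin : (Function.support u₂).Finite)
    (hu₁S : ∀ s ∈ S, u₁ s = 0) (hu₂S : ∀ s ∈ S, u₂ s = 0)
    (hσ : ∀ x ∉ S, (Fpow G c u₁ ρ₀ σ₀).2 x = (Fpow G c u₂ ρ₀ σ₀).2 x)
    (hρ₁ : AcyclicOn Sᶜ (Fpow G c u₁ ρ₀ σ₀).1)
    (hρ₂ : AcyclicOn Sᶜ (Fpow G c u₂ ρ₀ σ₀).1) :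
    u₁ = u₂ :=
  le_antisymm (le_of_Fpow_snd_eq_of_acyclicOn G c hu₁fin hu₂fin hu₁S hσ hρ₁)
    (le_of_Fpow_snd_eq_of_acyclicOn G c hu₂fin hu₁fin hu₂S (fun x hx => (hσ x hx).symm) hρ₂)

/-- **Strong Abelian Property.** -/
theorem strong_abelian_property (G : SimpleGraph V) [G.LocallyFinite]
    (c : V → ℕ → V)
    (hc : ∀ x y : V, G.Adj x y ↔ ∃ i < G.degree x, c x i = y)
    (hinj : ∀ x : V, Set.InjOn (c x) (Set.Iio (G.degree x)))
    (S : Set V) (hS : S.Nonempty)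
    (ρ₀ : V → V) (hρ₀ : ∀ x ∉ S, G.Adj x (ρ₀ x))
    (σ₀ : V → ℤ) (hσ₀ : (Function.support σ₀).Finite)
    (u₁ u₂ : V → ℕ)
    (hu₁fin : (Function.support u₁).Finite) (hu₂fin : (Function.support u₂).Finite)
    (hu₁S : ∀ s ∈ S, u₁ s = 0) (hu₂S : ∀ s ∈ S, u₂ s = 0)
    (hσ : ∀ x ∉ S, (Fpow G c u₁ ρ₀ σ₀).2 x = (Fpow G c u₂ ρ₀ σ₀).2 x)
    (hρ₁ : AcyclicOn Sᶜ (Fpow G c u₁ ρ₀ σ₀).1)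
    (hρ₂ : AcyclicOn Sᶜ (Fpow G c u₂ ρ₀ σ₀).1) :
    u₁ = u₂ :=
  strong_abelian_property_general G c S ρ₀ σ₀ u₁ u₂ hu₁fin hu₂fin hu₁S hu₂S hσ hρ₁ hρ₂

end Stmt3
end

section
/- (Friedrich–Levine odometer criterion) Let G be an infinite, locally finite, connected graph with root o, ρ₀ an initial rotor configuration on G, and σ₀ = n·δ_o. Fix a finitely supported u_* : G → ℕ, let A_* = {x ∈ G : u_*(x) > 0}, and define (ρ_*, σ_*) = F^{u_*}(ρ₀, σ₀). Suppose (a) σ_*(x) ≤ 1 for all x, (b) A_* is finite, (c) σ_*(x) = 1 for all x ∈ A_*, and (d) ρ_* is acyclic on A_* (the directed graph with edges (x, ρ_*(x)) for x ∈ A_* has no directed cycle). Then u_* equals the odometer function of rotor-router aggregation of n particles started at o with initial rotor configuration ρ₀. -/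
/-!
**Friedrich–Levine odometer criterion.**  Let `G` be an infinite, locally finite,
connected graph with root `o`, `ρ₀` an initial rotor configuration, and
`σ₀ = n·δ_o`.  If a finitely supported `u* : G → ℕ` with
`(ρ*, σ*) = F^{u*}(ρ₀, σ₀)` satisfies (a) `σ* ≤ 1`, (b) `A* = {u* > 0}` is
finite, (c) `σ* = 1` on `A*`, and (d) `ρ*` is acyclic on `A*`, then `u*` is the
odometer function of rotor-router aggregation of `n` particles started at `o`.
-/

namespace Stmt4

variable {V : Type*} [DecidableEq V]

/-- Advance the rotor at `x` currently pointing at `y`: if `y = x_i` in the cyclic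
ordering `c x` of the `deg x` neighbours of `x`, the rotor moves to
`x_{(i+1) mod deg x}`. -/
noncomputable def plus (G : SimpleGraph V) [G.LocallyFinite] (c : V → ℕ → V)
    (x y : V) : V :=
  if hi : ∃ i, i < G.degree x ∧ c x i = y then c x ((Nat.find hi + 1) % G.degree x)
  else y

/-- The number of particles sent from `x` to `y` when `x`, whose rotor initially
points at `ρx`, is toppled `n` times. -/
noncomputable def sentCount (G : SimpleGraph V) [G.LocallyFinite] (c : V → ℕ → V)
    (x : V) (ρx : V) (n : ℕ) (y : V) : ℕ :=
  ((Finset.range n).filter (fun k => (plus G c x)^[k + 1] ρx = y)).card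

/-- `F^u (ρ, σ)`: the result of toppling each vertex `x` exactly `u x` times
(well defined by the abelian property). -/
noncomputable def Fpow (G : SimpleGraph V) [G.LocallyFinite] (c : V → ℕ → V)
    (u : V → ℕ) (ρ : V → V) (σ : V → ℤ) : (V → V) × (V → ℤ) :=
  (fun x => (plus G c x)^[u x] (ρ x),
   fun y => σ y - u y + ∑ᶠ x, (sentCount G c x (ρ x) (u x) y : ℤ))

/-- A rotor configuration `ρ` is acyclic on the vertex set `A` if the directed
graph with edge set `{(x, ρ x) : x ∈ A}` contains no directed cycle. -/
def AcyclicOn (A : Set V) (ρ : V → V) : Prop :=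
  ¬ ∃ (x : V) (n : ℕ), 0 < n ∧ (∀ i < n, ρ^[i] x ∈ A) ∧ ρ^[n] x = x

/-- One step of a rotor-router walk, tracking (position, rotor configuration,
odometer): advance the rotor at the current position, move the particle there,
and record that one more particle was sent out of the current position. -/
noncomputable def wstep (G : SimpleGraph V) [G.LocallyFinite] (c : V → ℕ → V)
    (s : V × (V → V) × (V → ℕ)) : V × (V → V) × (V → ℕ) :=
  let ρ' := Function.update s.2.1 s.1 (plus G c s.1 (s.2.1 s.1))
  (ρ' s.1, ρ', Function.update s.2.2 s.1 (s.2.2 s.1 + 1))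

/-- The state of a rotor-router walk started at `o` after `t` steps. -/
noncomputable def pwalk (G : SimpleGraph V) [G.LocallyFinite] (c : V → ℕ → V)
    (o : V) (ρ : V → V) (u : V → ℕ) (t : ℕ) : V × (V → V) × (V → ℕ) :=
  (wstep G c)^[t] (o, ρ, u)

open Classical in
/-- Run one particle from `o` until it first leaves the cluster `R`; return its
final position together with the rotor configuration and odometer at that time. -/
noncomputable def settle (G : SimpleGraph V) [G.LocallyFinite] (c : V → ℕ → V)
    (o : V) (R : Set V) (ρ : V → V) (u : V → ℕ) : V × (V → V) × (V → ℕ) :=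
  if hex : ∃ t, (pwalk G c o ρ u t).1 ∉ R then pwalk G c o ρ u (Nat.find hex)
  else (o, ρ, u)

/-- Rotor-router aggregation with root `o`: `aggO k` is the triple
(cluster, rotor configuration, odometer) after `k + 1` particles; the first
particle just occupies `o` and each further particle performs a rotor-router walk
from `o` until it exits the current cluster, which it then joins. -/
noncomputable def aggO (G : SimpleGraph V) [G.LocallyFinite] (c : V → ℕ → V)
    (o : V) (ρ₀ : V → V) : ℕ → Set V × (V → V) × (V → ℕ)
  | 0 => ({o}, ρ₀, fun _ => 0)
  | k + 1 =>
      let s := aggO G c o ρ₀ k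
      let e := settle G c o s.1 s.2.1 s.2.2
      (insert e.1 s.1, e.2.1, e.2.2)

/-- The odometer function of rotor-router aggregation of `n` particles:
the number of particles sent out by each vertex during the creation of the
cluster of `n` particles. -/
noncomputable def odometer (G : SimpleGraph V) [G.LocallyFinite] (c : V → ℕ → V)
    (o : V) (ρ₀ : V → V) (n : ℕ) : V → ℕ :=
  (aggO G c o ρ₀ (n - 1)).2.2

/-!
A step of a rotor walk is a single toppling of the walker's vertex, so after `k + 1` particles
rotor-router aggregation is `F^{u_k}(ρ₀, σ₀)`, with `k + 1` particles taken from `o` and one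
added on each vertex of the cluster. While particles remain at `o`, the walker inside the
cluster always stands on a vertex holding two particles; since `σ_* ≤ 1`, such a vertex must
still topple in `u_*`, so `u_k ≤ u_*` (least action). For the final odometer `u = u_{n-1}` every
vertex holds at most one particle. If `u ≠ u_*`, acyclicity of `ρ_*` gives a vertex toppling in
`u_* - u` whose rotor points to a vertex `y` that does not; then `y` ends with strictly more
particles under `u_*` than under `u`, no vertex ends with fewer, and this contradicts
conservation of particles.
-/

structure IsCyclicOrdering (G : SimpleGraph V) [G.LocallyFinite] (c : V → ℕ → V) : Prop where
  adj_iff : ∀ x y : V, G.Adj x y ↔ ∃ i < G.degree x, c x i = y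
  injOn : ∀ x : V, Set.InjOn (c x) (Set.Iio (G.degree x))

open Function Finset Filter

theorem support_subset_of_le {α : Type*} {u v : α → ℕ} (h : u ≤ v) : support u ⊆ support v :=
  fun x hx h0 => hx (Nat.eq_zero_of_le_zero (h0 ▸ h x))

theorem AcyclicOn.exists_mem_map_notMem {α : Type*} {A B : Set α} {ρ : α → α} (hac : AcyclicOn A ρ)
    (hBA : B ⊆ A) (hB : B.Finite) (hne : B.Nonempty) : ∃ x ∈ B, ρ x ∉ B := by
  by_contra! hclosed
  obtain ⟨b, hb⟩ := hne
  have hmaps : ∀ m, ρ^[m] b ∈ B := fun m => by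
    induction m with
    | zero => exact hb
    | succ m ih => rw [iterate_succ_apply']; exact hclosed _ ih
  obtain ⟨i, -, j, -, hij, heq⟩ := Set.Infinite.exists_lt_map_eq_of_mapsTo Set.infinite_univ
    (fun m _ => hmaps m) hB
  refine hac ⟨ρ^[i] b, j - i, by omega, fun m _ => hBA ?_, ?_⟩
  · rw [← iterate_add_apply]; exact hmaps _
  · rw [← iterate_add_apply, Nat.sub_add_cancel hij.le, heq]

variable {G : SimpleGraph V} [G.LocallyFinite] {c : V → ℕ → V}

namespace IsCyclicOrdering

theorem plus_enum (hG : IsCyclicOrdering G c) {x : V} {i : ℕ} (hi : i < G.degree x) :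
    plus G c x (c x i) = c x ((i + 1) % G.degree x) := by
  have hex : ∃ j, j < G.degree x ∧ c x j = c x i := ⟨i, hi, rfl⟩
  have hfind : Nat.find hex = i := hG.injOn x (Nat.find_spec hex).1 hi (Nat.find_spec hex).2
  rw [plus, dif_pos hex, hfind]

theorem plus_iterate_enum (hG : IsCyclicOrdering G c) {x : V} {i : ℕ} (hi : i < G.degree x)
    (k : ℕ) : (plus G c x)^[k] (c x i) = c x ((i + k) % G.degree x) := by
  induction k with
  | zero => rw [iterate_zero_apply, add_zero, Nat.mod_eq_of_lt hi]
  | succ k ih =>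
    rw [iterate_succ_apply', ih, hG.plus_enum (Nat.mod_lt _ ((Nat.zero_le i).trans_lt hi)),
      Nat.mod_add_mod, add_assoc]

theorem adj_plus (hG : IsCyclicOrdering G c) {x y : V} (h : G.Adj x y) :
    G.Adj x (plus G c x y) := by
  obtain ⟨i, hi, rfl⟩ := (hG.adj_iff x y).1 h
  rw [hG.plus_enum hi]
  exact (hG.adj_iff x _).2 ⟨_, Nat.mod_lt _ ((Nat.zero_le i).trans_lt hi), rfl⟩

theorem frequently_plus_iterate_eq (hG : IsCyclicOrdering G c) {x y z : V} (hz : G.Adj x z)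
    (hy : G.Adj x y) : ∃ᶠ k in atTop, (plus G c x)^[k] z = y := by
  obtain ⟨i, hi, rfl⟩ := (hG.adj_iff x z).1 hz
  obtain ⟨j, hj, rfl⟩ := (hG.adj_iff x y).1 hy
  refine frequently_atTop.2 fun N => ⟨j + G.degree x * (N + 1) - i, ?_, ?_⟩
  · have : N + G.degree x ≤ G.degree x * (N + 1) := by nlinarith
    omega
  · have hperiod : i + (j + G.degree x * (N + 1) - i) = j + G.degree x * (N + 1) := by
      have : G.degree x ≤ G.degree x * (N + 1) := Nat.le_mul_of_pos_right _ N.succ_pos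
      omega
    rw [hG.plus_iterate_enum hi, hperiod, Nat.add_mul_mod_self_left, Nat.mod_eq_of_lt hj]

end IsCyclicOrdering

theorem sentCount_zero (x ρx y : V) : sentCount G c x ρx 0 y = 0 := rfl

theorem sentCount_succ (x ρx : V) (m : ℕ) (y : V) :
    sentCount G c x ρx (m + 1) y
      = sentCount G c x ρx m y + if (plus G c x)^[m + 1] ρx = y then 1 else 0 := by
  unfold sentCount
  rw [range_add_one, filter_insert]
  split_ifs
  · exact card_insert_of_notMem fun h => notMem_range_self (mem_of_mem_filter m h)
  · rfl

theorem sentCount_add (x ρx : V) (a b : ℕ) (y : V) :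
    sentCount G c x ρx (a + b) y
      = sentCount G c x ρx a y + sentCount G c x ((plus G c x)^[a] ρx) b y := by
  induction b with
  | zero => rfl
  | succ b ih =>
    rw [← add_assoc, sentCount_succ, ih, sentCount_succ, add_assoc, ← iterate_add_apply,
      add_comm (b + 1) a, add_assoc]

theorem one_le_sentCount_iterate (x ρx : V) {m : ℕ} (hm : m ≠ 0) :
    1 ≤ sentCount G c x ρx m ((plus G c x)^[m] ρx) := by
  obtain ⟨k, rfl⟩ := Nat.exists_eq_succ_of_ne_zero hm
  rw [sentCount_succ, if_pos rfl]
  exact Nat.le_add_left 1 _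

theorem sum_sentCount (x ρx : V) (m : ℕ) {S : Finset V}
    (hS : ∀ k < m, (plus G c x)^[k + 1] ρx ∈ S) :
    ∑ y ∈ S, sentCount G c x ρx m y = m := by
  unfold sentCount
  rw [← card_eq_sum_card_fiberwise fun k hk => hS k (mem_range.1 hk), card_range]

theorem support_sentCount_subset (u : V → ℕ) (ρ : V → V) (y : V) :
    support (fun x => (sentCount G c x (ρ x) (u x) y : ℤ)) ⊆ support u := by
  intro x hx hux
  simp [hux, sentCount_zero] at hx

theorem Fpow_zero (ρ : V → V) (σ : V → ℤ) : Fpow G c 0 ρ σ = (ρ, σ) := by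
  refine Prod.ext rfl (funext fun y => ?_)
  simp [Fpow, sentCount_zero]

theorem Fpow_add {u v : V → ℕ} (hu : (support u).Finite) (hv : (support v).Finite)
    (ρ : V → V) (σ : V → ℤ) :
    Fpow G c (u + v) ρ σ = Fpow G c v (Fpow G c u ρ σ).1 (Fpow G c u ρ σ).2 := by
  refine Prod.ext (funext fun x => ?_) (funext fun y => ?_)
  · simp only [Fpow, Pi.add_apply]
    rw [add_comm, iterate_add_apply]
  · simp only [Fpow, Pi.add_apply, sentCount_add, Nat.cast_add]
    rw [finsum_add_distrib (hu.subset (support_sentCount_subset u ρ y))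
      (hv.subset (support_sentCount_subset v _ y))]
    ring

theorem Fpow_eq_Fpow_sub {u v : V → ℕ} (hv : (support v).Finite) (huv : u ≤ v)
    (ρ : V → V) (σ : V → ℤ) :
    Fpow G c v ρ σ = Fpow G c (v - u) (Fpow G c u ρ σ).1 (Fpow G c u ρ σ).2 := by
  rw [← Fpow_add (hv.subset (support_subset_of_le huv))
    (hv.subset (support_subset_of_le tsub_le_self)), add_tsub_cancel_of_le huv]

theorem Fpow_single (x : V) (ρ : V → V) (σ : V → ℤ) :
    Fpow G c (Pi.single x 1) ρ σ
      = (update ρ x (plus G c x (ρ x)),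
         σ - Pi.single x 1 + Pi.single (plus G c x (ρ x)) 1) := by
  refine Prod.ext (funext fun z => ?_) (funext fun y => ?_)
  · by_cases h : z = x
    · subst h; simp [Fpow]
    · simp [Fpow, h]
  · have hsent : ∑ᶠ z, (sentCount G c z (ρ z) ((Pi.single x 1 : V → ℕ) z) y : ℤ)
        = if plus G c x (ρ x) = y then 1 else 0 := by
      rw [finsum_eq_single _ x fun z hz => by simp [hz, sentCount_zero]]
      simp [sentCount_succ, sentCount_zero]
    simp only [Fpow]
    rw [hsent]
    simp only [Pi.add_apply, Pi.sub_apply, Pi.single_apply, eq_comm (a := y)]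
    split_ifs <;> simp

theorem sum_Fpow_snd {S : Finset V} {u : V → ℕ} {ρ : V → V} (hu : support u ⊆ S)
    (ht : ∀ x ∈ support u, ∀ k < u x, (plus G c x)^[k + 1] (ρ x) ∈ S) (σ : V → ℤ) :
    ∑ y ∈ S, (Fpow G c u ρ σ).2 y = ∑ y ∈ S, σ y := by
  have hinflow : ∀ y, ∑ᶠ x, (sentCount G c x (ρ x) (u x) y : ℤ)
      = ∑ x ∈ S, (sentCount G c x (ρ x) (u x) y : ℤ) := fun y =>
    finsum_eq_sum_of_support_subset _ ((support_sentCount_subset u ρ y).trans hu)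
  have houtflow : ∀ x ∈ S, ∑ y ∈ S, (sentCount G c x (ρ x) (u x) y : ℤ) = u x := by
    intro x _
    by_cases hx : u x = 0
    · simp [hx, sentCount_zero]
    · exact_mod_cast sum_sentCount x (ρ x) (u x) (ht x hx)
  simp only [Fpow, hinflow, sum_add_distrib, sum_sub_distrib]
  rw [sum_comm, sum_congr rfl houtflow]
  ring

theorem le_Fpow_snd {u : V → ℕ} {y : V} (hy : u y = 0) (ρ : V → V) (σ : V → ℤ) :
    σ y ≤ (Fpow G c u ρ σ).2 y := by
  have : (0 : ℤ) ≤ ∑ᶠ x, (sentCount G c x (ρ x) (u x) y : ℤ) := finsum_nonneg fun _ => by positivity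
  simp only [Fpow, hy]
  omega

theorem lt_Fpow_snd {u : V → ℕ} (hu : (support u).Finite) {x y : V} (hx : u x ≠ 0)
    (hy : u y = 0) (ρ : V → V) (σ : V → ℤ) (hxy : (Fpow G c u ρ σ).1 x = y) :
    σ y < (Fpow G c u ρ σ).2 y := by
  subst hxy
  have hsent : (1 : ℤ) ≤ sentCount G c x (ρ x) (u x) ((plus G c x)^[u x] (ρ x)) := by
    exact_mod_cast one_le_sentCount_iterate x (ρ x) hx
  have := single_le_finsum (f := fun z => (sentCount G c z (ρ z) (u z)
    ((plus G c x)^[u x] (ρ x)) : ℤ)) x (hu.subset (support_sentCount_subset u ρ _))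
    fun _ => Int.natCast_nonneg _
  simp only [Fpow] at hy ⊢
  omega

theorem exists_finset_plus_iterate_mem {v : V → ℕ} (hv : (support v).Finite) (ρ : V → V) :
    ∃ S : Finset V, support v ⊆ S ∧ ∀ x ∈ support v, ∀ k < v x, (plus G c x)^[k + 1] (ρ x) ∈ S :=
  ⟨hv.toFinset.biUnion fun x => insert x ((range (v x)).image fun k => (plus G c x)^[k + 1] (ρ x)),
    fun x hx => mem_biUnion.2 ⟨x, hv.mem_toFinset.2 hx, mem_insert_self _ _⟩,
    fun x hx _ hk => mem_biUnion.2 ⟨x, hv.mem_toFinset.2 hx,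
      mem_insert_of_mem (mem_image_of_mem _ (mem_range.2 hk))⟩⟩

theorem eq_of_le_of_acyclicOn {u v : V → ℕ} {ρ : V → V} {σ : V → ℤ}
    (hv : (support v).Finite) (huv : u ≤ v) (hσu : ∀ x, (Fpow G c u ρ σ).2 x ≤ 1)
    (hσv : ∀ x ∈ support v, (Fpow G c v ρ σ).2 x = 1)
    (hac : AcyclicOn (support v) (Fpow G c v ρ σ).1) : u = v := by
  by_contra hne
  have hFv := Fpow_eq_Fpow_sub (G := G) (c := c) hv huv ρ σ
  have hwv : support (v - u) ⊆ support v := support_subset_of_le tsub_le_self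
  have hw : (support (v - u)).Nonempty := by
    obtain ⟨x, hx⟩ := Function.ne_iff.1 hne
    exact ⟨x, Nat.sub_ne_zero_of_lt (lt_of_le_of_ne (huv x) hx)⟩
  obtain ⟨x, hx, hy⟩ := hac.exists_mem_map_notMem hwv (hv.subset hwv) hw
  have hle : ∀ z, (Fpow G c u ρ σ).2 z ≤ (Fpow G c v ρ σ).2 z := by
    intro z
    by_cases hz : (v - u) z = 0
    · rw [hFv]; exact le_Fpow_snd hz _ _
    · rw [hσv z (hwv hz)]; exact hσu z
  have hlt : (Fpow G c u ρ σ).2 ((Fpow G c v ρ σ).1 x)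
      < (Fpow G c v ρ σ).2 ((Fpow G c v ρ σ).1 x) := by
    rw [hFv] at hy ⊢
    exact lt_Fpow_snd (hv.subset hwv) hx (not_not.1 hy) _ _ rfl
  obtain ⟨S, hvS, hvt⟩ := exists_finset_plus_iterate_mem (G := G) (c := c) hv ρ
  have huv' := support_subset_of_le huv
  have hconserved : ∑ y ∈ S, (Fpow G c u ρ σ).2 y = ∑ y ∈ S, (Fpow G c v ρ σ).2 y := by
    rw [sum_Fpow_snd (huv'.trans hvS) (fun z hz k hk => hvt z (huv' hz) k (hk.trans_le (huv z))),
      sum_Fpow_snd hvS hvt]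
  have hxS : (Fpow G c v ρ σ).1 x ∈ S := by
    have hvx : v x ≠ 0 := fun h0 => hwv hx h0
    have := hvt x hvx (v x - 1) (by omega)
    rwa [Nat.sub_add_cancel (Nat.one_le_iff_ne_zero.2 hvx)] at this
  exact (sum_lt_sum (fun z _ => hle z) ⟨_, hxS, hlt⟩).ne hconserved

theorem pwalk_succ (o : V) (ρ : V → V) (u : V → ℕ) (t : ℕ) :
    pwalk G c o ρ u (t + 1) = wstep G c (pwalk G c o ρ u t) :=
  iterate_succ_apply' _ _ _

theorem wstep_fst (s : V × (V → V) × (V → ℕ)) : (wstep G c s).1 = plus G c s.1 (s.2.1 s.1) :=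
  update_self _ _ _

theorem wstep_rotor (s : V × (V → V) × (V → ℕ)) :
    (wstep G c s).2.1 = update s.2.1 s.1 (plus G c s.1 (s.2.1 s.1)) := rfl

theorem wstep_odometer (s : V × (V → V) × (V → ℕ)) :
    (wstep G c s).2.2 = s.2.2 + Pi.single s.1 1 := by
  ext z
  by_cases h : z = s.1
  · subst h; simp [wstep]
  · simp [wstep, h]

theorem support_wstep_odometer_finite {s : V × (V → V) × (V → ℕ)} (hs : (support s.2.2).Finite) :
    (support (wstep G c s).2.2).Finite := by
  rw [wstep_odometer]
  exact (hs.union (Set.finite_singleton s.1)).subset (support_add _ _ |>.trans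
    (Set.union_subset_union_right _ Pi.support_single_subset))

theorem support_pwalk_odometer_finite (o : V) (ρ : V → V) {u : V → ℕ} (hu : (support u).Finite)
    (t : ℕ) : (support (pwalk G c o ρ u t).2.2).Finite := by
  induction t with
  | zero => exact hu
  | succ t ih => rw [pwalk_succ]; exact support_wstep_odometer_finite ih

theorem Fpow_wstep {s : V × (V → V) × (V → ℕ)} {ρ : V → V} {σ τ : V → ℤ}
    (hs : (support s.2.2).Finite) (hF : Fpow G c s.2.2 ρ σ = (s.2.1, τ)) :
    Fpow G c (wstep G c s).2.2 ρ σ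
      = ((wstep G c s).2.1, τ - Pi.single s.1 1 + Pi.single (wstep G c s).1 1) := by
  rw [wstep_odometer, Fpow_add hs ((Set.finite_singleton s.1).subset Pi.support_single_subset), hF,
    Fpow_single, wstep_fst, wstep_rotor]

theorem Fpow_pwalk (o : V) {ρ ρs : V → V} {u : V → ℕ} {σ τ : V → ℤ} (hu : (support u).Finite)
    (hF : Fpow G c u ρ σ = (ρs, τ)) (t : ℕ) :
    Fpow G c (pwalk G c o ρs u t).2.2 ρ σ
      = ((pwalk G c o ρs u t).2.1, τ - Pi.single o 1 + Pi.single (pwalk G c o ρs u t).1 1) := by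
  induction t with
  | zero => rw [pwalk, iterate_zero_apply, hF, sub_add_cancel]
  | succ t ih =>
    rw [pwalk_succ, Fpow_wstep (support_pwalk_odometer_finite o ρs hu t) ih, add_sub_cancel_right]

theorem pwalk_rotor_adj (hG : IsCyclicOrdering G c) (o : V) {ρ : V → V} (hρ : ∀ x, G.Adj x (ρ x))
    (u : V → ℕ) (t : ℕ) (x : V) : G.Adj x ((pwalk G c o ρ u t).2.1 x) := by
  induction t generalizing x with
  | zero => exact hρ x
  | succ t ih =>
    rw [pwalk_succ, wstep_rotor, update_apply]
    split_ifs with h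
    · subst h; exact hG.adj_plus (ih _)
    · exact ih x

theorem add_single_le_of_two_le {u v : V → ℕ} {ρ : V → V} {σ : V → ℤ} (hv : (support v).Finite)
    (hσv : ∀ x, (Fpow G c v ρ σ).2 x ≤ 1) (huv : u ≤ v) {x : V}
    (hx : 2 ≤ (Fpow G c u ρ σ).2 x) : u + Pi.single x 1 ≤ v := by
  have hlt : u x < v x := by
    by_contra! hge
    have hsub : (v - u) x = 0 := Nat.sub_eq_zero_of_le hge
    have := hσv x
    rw [Fpow_eq_Fpow_sub hv huv] at this
    have := le_Fpow_snd (G := G) (c := c) hsub (Fpow G c u ρ σ).1 (Fpow G c u ρ σ).2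
    omega
  intro z
  by_cases h : z = x
  · subst h; simpa using hlt
  · simpa [h] using huv z

theorem pwalk_odometer_le (o : V) {ρ ρs : V → V} {u v : V → ℕ} {σ : V → ℤ}
    (hv : (support v).Finite) (hσv : ∀ x, (Fpow G c v ρ σ).2 x ≤ 1) (huv : u ≤ v) {T : ℕ}
    (hT : ∀ t < T, 2 ≤ (Fpow G c (pwalk G c o ρs u t).2.2 ρ σ).2 (pwalk G c o ρs u t).1) :
    (pwalk G c o ρs u T).2.2 ≤ v := by
  induction T with
  | zero => exact huv
  | succ T ih =>
    rw [pwalk_succ, wstep_odometer]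
    exact add_single_le_of_two_le hv hσv (ih fun t ht => hT t (by omega)) (hT T T.lt_succ_self)

theorem pwalk_rotor_eq (o : V) (ρ : V → V) (u : V → ℕ) (t : ℕ) (x : V) :
    (pwalk G c o ρ u t).2.1 x
      = (plus G c x)^[Nat.count (fun i => (pwalk G c o ρ u i).1 = x) t] (ρ x) := by
  induction t with
  | zero => rfl
  | succ t ih =>
    rw [pwalk_succ, wstep_rotor, update_apply, Nat.count_succ, ih]
    rcases eq_or_ne (pwalk G c o ρ u t).1 x with h | h
    · subst h; simp [ih, iterate_succ_apply']
    · simp [h, h.symm]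

/-- `Nat.nth _ m` is the time of the `m`-th visit to `x`, counted from `0`. -/
theorem pwalk_fst_nth_succ (o : V) (ρ : V → V) (u : V → ℕ) {x : V}
    (hx : {t | (pwalk G c o ρ u t).1 = x}.Infinite) (m : ℕ) :
    (pwalk G c o ρ u (Nat.nth (fun t => (pwalk G c o ρ u t).1 = x) m + 1)).1
      = (plus G c x)^[m + 1] (ρ x) := by
  have hvisit := Nat.nth_mem_of_infinite hx m
  rw [pwalk_succ, wstep_fst, hvisit, pwalk_rotor_eq, Nat.count_nth_of_infinite hx,
    iterate_succ_apply']

theorem infinite_visits_of_adj (hG : IsCyclicOrdering G c) (o : V) {ρ : V → V}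
    (hρ : ∀ x, G.Adj x (ρ x)) (u : V → ℕ) {x y : V}
    (hx : {t | (pwalk G c o ρ u t).1 = x}.Infinite) (hxy : G.Adj x y) :
    {t | (pwalk G c o ρ u t).1 = y}.Infinite := by
  refine Nat.frequently_atTop_iff_infinite.1 (frequently_atTop.2 fun N => ?_)
  obtain ⟨_ | m, hm, hmy⟩ := frequently_atTop.1 (hG.frequently_plus_iterate_eq (hρ x) hxy) (N + 1)
  · omega
  refine ⟨_, ?_, (pwalk_fst_nth_succ o ρ u hx m).trans hmy⟩
  have := (Nat.nth_strictMono hx).le_apply (x := m)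
  omega

/-- Otherwise some vertex is visited infinitely often; its rotor then turns through all its
neighbours infinitely often, so each neighbour, and by connectedness every vertex, is visited
infinitely often. -/
theorem exists_pwalk_fst_notMem [Infinite V] (hG : IsCyclicOrdering G c) (hconn : G.Connected)
    (o : V) {ρ : V → V} (hρ : ∀ x, G.Adj x (ρ x)) (u : V → ℕ) {R : Set V} (hR : R.Finite) :
    ∃ t, (pwalk G c o ρ u t).1 ∉ R := by
  by_contra! hstay
  have : Finite R := hR.to_subtype
  obtain ⟨x, hfiber⟩ := Finite.exists_infinite_fiber fun t => (⟨_, hstay t⟩ : R)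
  have hx : {t | (pwalk G c o ρ u t).1 = x}.Infinite := by
    simpa [Set.preimage, Subtype.ext_iff] using Set.infinite_coe_iff.1 hfiber
  have hvisits : ∀ a b, G.Walk a b → {t | (pwalk G c o ρ u t).1 = a}.Infinite →
      {t | (pwalk G c o ρ u t).1 = b}.Infinite := by
    intro a b w
    induction w with
    | nil => exact id
    | cons h _ ih => exact fun ha => ih (infinite_visits_of_adj hG o hρ u ha h)
  obtain ⟨z, hz⟩ := hR.infinite_compl.nonempty
  obtain ⟨t, rfl⟩ := (hvisits x z (hconn.preconnected x z).some hx).nonempty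
  exact hz (hstay t)

section Aggregation

variable {o : V} {ρ₀ : V → V}

open Classical in
theorem exists_settle_eq_pwalk {R : Set V} {ρ : V → V} {u : V → ℕ}
    (hex : ∃ t, (pwalk G c o ρ u t).1 ∉ R) :
    ∃ T, settle G c o R ρ u = pwalk G c o ρ u T ∧ (pwalk G c o ρ u T).1 ∉ R ∧
      ∀ t < T, (pwalk G c o ρ u t).1 ∈ R := by
  rw [settle, dif_pos hex]
  exact ⟨_, rfl, Nat.find_spec hex, fun t ht => not_not.1 (Nat.find_min hex ht)⟩

theorem aggO_fst_finite (k : ℕ) : (aggO G c o ρ₀ k).1.Finite := by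
  induction k with
  | zero => exact Set.finite_singleton o
  | succ k ih => exact ih.insert _

theorem support_aggO_odometer_finite (k : ℕ) : (support (aggO G c o ρ₀ k).2.2).Finite := by
  induction k with
  | zero => simp [aggO]
  | succ k ih =>
    classical
    simp only [aggO, settle]
    split_ifs
    · exact support_pwalk_odometer_finite o _ ih _
    · exact ih

theorem aggO_rotor_adj (hG : IsCyclicOrdering G c) (hρ₀ : ∀ x, G.Adj x (ρ₀ x)) (k : ℕ) (x : V) :
    G.Adj x ((aggO G c o ρ₀ k).2.1 x) := by
  induction k generalizing x with
  | zero => exact hρ₀ x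
  | succ k ih =>
    classical
    simp only [aggO, settle]
    split_ifs
    · exact pwalk_rotor_adj hG o ih _ _ x
    · exact ih x

theorem exists_pwalk_aggO_notMem [Infinite V] (hG : IsCyclicOrdering G c) (hconn : G.Connected)
    (hρ₀ : ∀ x, G.Adj x (ρ₀ x)) (k : ℕ) :
    ∃ t, (pwalk G c o (aggO G c o ρ₀ k).2.1 (aggO G c o ρ₀ k).2.2 t).1 ∉ (aggO G c o ρ₀ k).1 :=
  exists_pwalk_fst_notMem hG hconn o (aggO_rotor_adj hG hρ₀ k) _ (aggO_fst_finite k)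

theorem Fpow_aggO [Infinite V] (hG : IsCyclicOrdering G c) (hconn : G.Connected)
    (hρ₀ : ∀ x, G.Adj x (ρ₀ x)) (σ : V → ℤ) (k : ℕ) :
    Fpow G c (aggO G c o ρ₀ k).2.2 ρ₀ σ
      = ((aggO G c o ρ₀ k).2.1, σ - Pi.single o (k + 1 : ℤ) + (aggO G c o ρ₀ k).1.indicator 1) := by
  induction k with
  | zero =>
    show Fpow G c 0 ρ₀ σ = (ρ₀, _)
    rw [Fpow_zero, Nat.cast_zero, zero_add, aggO, Set.indicator_singleton, Pi.one_apply,
      sub_add_cancel]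
  | succ k ih =>
    have hex := exists_pwalk_aggO_notMem (o := o) hG hconn hρ₀ k
    obtain ⟨T, hsettle, hnew, -⟩ := exists_settle_eq_pwalk hex
    show Fpow G c (settle G c o _ _ _).2.2 ρ₀ σ = ((settle G c o _ _ _).2.1, _)
    rw [hsettle, Fpow_pwalk o (support_aggO_odometer_finite k) ih]
    refine Prod.ext rfl ?_
    simp only [aggO, hsettle]
    rw [Set.insert_eq, Set.indicator_union_of_disjoint (Set.disjoint_singleton_left.2 hnew),
      Set.indicator_singleton, Pi.one_apply, Nat.cast_succ,
      Pi.single_add (f := fun _ : V => ℤ) o ((k : ℤ) + 1) 1]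
    ext y
    simp only [Pi.add_apply, Pi.sub_apply]
    ring

theorem aggO_odometer_le [Infinite V] (hG : IsCyclicOrdering G c) (hconn : G.Connected)
    (hρ₀ : ∀ x, G.Adj x (ρ₀ x)) {n : ℕ} {v : V → ℕ} (hv : (support v).Finite)
    (hσv : ∀ x, (Fpow G c v ρ₀ (Pi.single o (n : ℤ))).2 x ≤ 1) (k : ℕ) (hk : k + 1 ≤ n) :
    (aggO G c o ρ₀ k).2.2 ≤ v := by
  induction k with
  | zero => exact fun _ => Nat.zero_le _
  | succ k ih =>
    obtain ⟨T, hsettle, -, hstay⟩ :=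
      exists_settle_eq_pwalk (exists_pwalk_aggO_notMem (o := o) hG hconn hρ₀ k)
    show (settle G c o _ _ _).2.2 ≤ v
    rw [hsettle]
    refine pwalk_odometer_le o hv hσv (ih (by omega)) fun t ht => ?_
    rw [Fpow_pwalk o (support_aggO_odometer_finite k) (Fpow_aggO hG hconn hρ₀ _ k)]
    simp only [Pi.add_apply, Pi.sub_apply, Pi.single_apply, Set.indicator_of_mem (hstay t ht),
      Pi.one_apply]
    split_ifs <;> omega

end Aggregation

/-- **Friedrich–Levine odometer criterion.** -/
theorem friedrich_levine (G : SimpleGraph V) [G.LocallyFinite] [Infinite V]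
    (hconn : G.Connected)
    (c : V → ℕ → V)
    (hc : ∀ x y : V, G.Adj x y ↔ ∃ i < G.degree x, c x i = y)
    (hinj : ∀ x : V, Set.InjOn (c x) (Set.Iio (G.degree x)))
    (o : V) (ρ₀ : V → V) (hρ₀ : ∀ x, G.Adj x (ρ₀ x))
    (n : ℕ) (hn : 1 ≤ n)
    (ustar : V → ℕ)
    (hb : (Function.support ustar).Finite)
    (σ₀ : V → ℤ) (hσ₀ : σ₀ = fun y => if y = o then (n : ℤ) else 0)
    (ha : ∀ x, (Fpow G c ustar ρ₀ σ₀).2 x ≤ 1)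
    (hcc : ∀ x ∈ Function.support ustar, (Fpow G c ustar ρ₀ σ₀).2 x = 1)
    (hd : AcyclicOn (Function.support ustar) (Fpow G c ustar ρ₀ σ₀).1) :
    ustar = odometer G c o ρ₀ n := by
  have hG : IsCyclicOrdering G c := ⟨hc, hinj⟩
  obtain rfl : σ₀ = Pi.single o (n : ℤ) := by
    rw [hσ₀]; ext y; simp [Pi.single_apply]
  have hle := aggO_odometer_le hG hconn hρ₀ hb ha (n - 1) (by omega)
  refine (eq_of_le_of_acyclicOn hb hle (fun x => ?_) hcc hd).symm
  rw [Fpow_aggO hG hconn hρ₀, Nat.cast_pred hn, sub_add_cancel, sub_self, zero_add]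
  exact Set.indicator_apply_le' (fun _ => le_rfl) (fun _ => zero_le_one)

end Stmt4
end

section
/- Let h(x) = ⌊(x+1)²/3⌋ and B_m = {(x,y) ∈ ℤ×ℤ : |x| ≤ m and |y| ≤ h(m−|x|)}. Then for all m ≥ 0 the cardinality of B_m satisfies 9·|B_m| = 4m³ + 12m² + 24m + 5 + 2·((m+2) mod 3). -/
namespace Stmt5

/-- `h x = ⌊(x+1)²/3⌋`. -/
def hfun (x : ℕ) : ℕ := (x + 1) ^ 2 / 3

/-- The set `B_m = {(x,y) ∈ ℤ×ℤ : |x| ≤ m, |y| ≤ h(m - |x|)}`, as a `Finset`. -/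
noncomputable def Bfin (h : ℕ → ℕ) (m : ℕ) : Finset (ℤ × ℤ) :=
  ((Finset.Icc (-(m : ℤ)) (m : ℤ)) ×ˢ
      (Finset.Icc (-(((Finset.range (m + 1)).sup h : ℕ) : ℤ))
        (((Finset.range (m + 1)).sup h : ℕ) : ℤ))).filter
    (fun p => p.2.natAbs ≤ h (m - p.1.natAbs))

/-!
Counting column by column, `|B_m| = (2h(m) + 1) + 2 ∑_{j<m} (2h(j) + 1)`. On each residue class of
`m` mod 3 the function `h` is a polynomial, so the sum is evaluated by induction in steps of three.
-/

open Finset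

lemma card_filter_natAbs_le {N k : ℕ} (hk : k ≤ N) :
    #{y ∈ Icc (-(N : ℤ)) N | y.natAbs ≤ k} = 2 * k + 1 := by
  have : {y ∈ Icc (-(N : ℤ)) N | y.natAbs ≤ k} = Icc (-(k : ℤ)) k := by
    ext y; simp only [mem_filter, mem_Icc]; omega
  rw [this, Int.card_Icc]; omega

lemma card_Bfin_eq_sum_Icc (h : ℕ → ℕ) (m : ℕ) :
    #(Bfin h m) = ∑ x ∈ Icc (-(m : ℤ)) m, (2 * h (m - x.natAbs) + 1) := by
  rw [Bfin, card_filter, sum_product]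
  refine sum_congr rfl fun x _ => ?_
  have hmem : m - x.natAbs ∈ range (m + 1) := mem_range.2 (by omega)
  rw [← card_filter, card_filter_natAbs_le (le_sup (f := h) hmem)]

lemma sum_Icc_natAbs {M : Type*} [AddCommMonoid M] (f : ℕ → M) (m : ℕ) :
    ∑ x ∈ Icc (-(m : ℤ)) m, f x.natAbs = f 0 + 2 • ∑ k ∈ range m, f (k + 1) := by
  induction m with
  | zero => simp
  | succ m ih =>
    have hIcc : Icc (-((m + 1 : ℕ) : ℤ)) (m + 1 : ℕ) =
        insert (-((m + 1 : ℕ) : ℤ)) (insert ((m + 1 : ℕ) : ℤ) (Icc (-(m : ℤ)) m)) := by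
      ext x; simp only [mem_Icc, mem_insert]; omega
    rw [hIcc, sum_insert (by simp only [mem_insert, mem_Icc]; omega),
      sum_insert (by simp only [mem_Icc]; omega), ih, sum_range_succ, Int.natAbs_neg,
      Int.natAbs_natCast]
    abel

lemma card_Bfin_eq_sum_range (h : ℕ → ℕ) (m : ℕ) :
    #(Bfin h m) = 2 * h m + 1 + 2 * ∑ j ∈ range m, (2 * h j + 1) := by
  rw [card_Bfin_eq_sum_Icc, sum_Icc_natAbs (M := ℕ) (fun k => 2 * h (m - k) + 1), smul_eq_mul,
    Nat.sub_zero, ← sum_range_reflect (fun j => 2 * h j + 1)]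
  congr 3 with k
  rw [Nat.sub_sub, add_comm 1 k]

lemma hfun_three_mul (q : ℕ) : hfun (3 * q) = 3 * q ^ 2 + 2 * q := by
  unfold hfun; ring_nf; omega

lemma hfun_three_mul_add_one (q : ℕ) : hfun (3 * q + 1) = 3 * q ^ 2 + 4 * q + 1 := by
  unfold hfun; ring_nf; omega

lemma hfun_three_mul_add_two (q : ℕ) : hfun (3 * q + 2) = 3 * q ^ 2 + 6 * q + 3 := by
  unfold hfun; ring_nf; omega

lemma sum_range_three_mul_hfun (q : ℕ) :
    ∑ j ∈ range (3 * q), (2 * hfun j + 1) = 6 * q ^ 3 + 3 * q ^ 2 + 2 * q := by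
  induction q with
  | zero => simp
  | succ q ih =>
    rw [show 3 * (q + 1) = 3 * q + 2 + 1 by ring, sum_range_succ, sum_range_succ,
      sum_range_succ, ih, hfun_three_mul, hfun_three_mul_add_one, hfun_three_mul_add_two]
    ring

/-- **Cardinality of `B_m`.** -/
theorem card_Bm (m : ℕ) :
    9 * (Bfin hfun m).card = 4 * m ^ 3 + 12 * m ^ 2 + 24 * m + 5 + 2 * ((m + 2) % 3) := by
  rw [card_Bfin_eq_sum_range]
  obtain ⟨q, rfl | rfl | rfl⟩ : ∃ q, m = 3 * q ∨ m = 3 * q + 1 ∨ m = 3 * q + 2 :=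
    ⟨m / 3, by omega⟩
  · rw [hfun_three_mul, sum_range_three_mul_hfun, show (3 * q + 2) % 3 = 2 by omega]
    ring
  · rw [hfun_three_mul_add_one, sum_range_succ, sum_range_three_mul_hfun, hfun_three_mul,
      show (3 * q + 1 + 2) % 3 = 0 by omega]
    ring
  · rw [hfun_three_mul_add_two, sum_range_succ, sum_range_succ, sum_range_three_mul_hfun,
      hfun_three_mul, hfun_three_mul_add_one, show (3 * q + 2 + 2) % 3 = 1 by omega]
    ring

end Stmt5
end

section
/- Let h(x) = ⌊(x+1)²/3⌋ and B_m = {(x,y) ∈ ℤ×ℤ : |x| ≤ m and |y| ≤ h(m−|x|)}. Then for all k ≥ 0: |B_{3k}| = 12k³ + 12k² + 8k + 1, |B_{3k+1}| = 12k³ + 24k² + 20k + 5, and |B_{3k+2}| = 12k³ + 36k² + 40k + 15. -/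
/-!
Column `x` of `B_m` holds `2 h(m - |x|) + 1` points, and folding `x ↦ m - |x|` turns `|B_m|`
into `S(m + 1) + S(m)` for the partial sums `S(n) = ∑_{j < n} (2 h(j) + 1)`. On each residue
class mod 3, `h` is an explicit quadratic, so `S(3k)` is a cubic in `k`, found by induction
over blocks of three consecutive columns.
-/

namespace Stmt6

/-- `h x = ⌊(x+1)²/3⌋`. -/
def hfun (x : ℕ) : ℕ := (x + 1) ^ 2 / 3

/-- The set `B_m = {(x,y) ∈ ℤ×ℤ : |x| ≤ m, |y| ≤ h(m - |x|)}`, as a `Finset`. -/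
noncomputable def Bfin (h : ℕ → ℕ) (m : ℕ) : Finset (ℤ × ℤ) :=
  ((Finset.Icc (-(m : ℤ)) (m : ℤ)) ×ˢ
      (Finset.Icc (-(((Finset.range (m + 1)).sup h : ℕ) : ℤ))
        (((Finset.range (m + 1)).sup h : ℕ) : ℤ))).filter
    (fun p => p.2.natAbs ≤ h (m - p.1.natAbs))

open Finset

theorem card_Bfin_eq_sum (h : ℕ → ℕ) (m : ℕ) :
    (Bfin h m).card = ∑ x ∈ Icc (-(m : ℤ)) m, (2 * h (m - x.natAbs) + 1) := by
  rw [Bfin, card_filter, sum_product]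
  refine sum_congr rfl fun x hx => ?_
  set N := (range (m + 1)).sup h
  have hle : h (m - x.natAbs) ≤ N := le_sup (mem_range.mpr (by omega))
  have hcol : {y ∈ Icc (-(N : ℤ)) N | y.natAbs ≤ h (m - x.natAbs)} =
      Icc (-(h (m - x.natAbs) : ℤ)) (h (m - x.natAbs)) := by
    ext y; simp only [mem_filter, mem_Icc]; omega
  rw [← card_filter, hcol, Int.card_Icc]
  omega

theorem sum_Icc_neg_natAbs {M : Type*} [AddCommMonoid M] (f : ℕ → M) (m : ℕ) :
    ∑ x ∈ Icc (-(m : ℤ)) m, f x.natAbs =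
      ∑ j ∈ range (m + 1), f j + ∑ j ∈ range m, f (j + 1) := by
  induction m with
  | zero => simp
  | succ m ih =>
    have hIcc : Icc (-((m + 1 : ℕ) : ℤ)) (m + 1 : ℕ) =
        insert (-((m + 1 : ℕ) : ℤ)) (insert ((m + 1 : ℕ) : ℤ) (Icc (-(m : ℤ)) m)) := by
      ext x; simp only [mem_Icc, mem_insert]; omega
    rw [hIcc, sum_insert (by simp; omega), sum_insert (by simp), ih, sum_range_succ f (m + 1),
      sum_range_succ (fun j => f (j + 1)) m]
    simp only [Int.natAbs_neg, Int.natAbs_natCast]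
    abel

def colSum (h : ℕ → ℕ) (n : ℕ) : ℕ := ∑ j ∈ range n, (2 * h j + 1)

theorem card_Bfin_eq_colSum (h : ℕ → ℕ) (m : ℕ) :
    (Bfin h m).card = colSum h (m + 1) + colSum h m := by
  rw [card_Bfin_eq_sum, sum_Icc_neg_natAbs (fun j => 2 * h (m - j) + 1), colSum, colSum,
    ← sum_range_reflect _ (m + 1), ← sum_range_reflect _ m]
  congr 1 <;> refine sum_congr rfl fun j hj => ?_ <;> rw [mem_range] at hj <;> congr 3 <;> omega

theorem hfun_three_mul (k : ℕ) : hfun (3 * k) = 3 * k ^ 2 + 2 * k := by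
  rw [hfun, show (3 * k + 1) ^ 2 = 3 * (3 * k ^ 2 + 2 * k) + 1 by ring]; omega

theorem hfun_three_mul_add_one (k : ℕ) : hfun (3 * k + 1) = 3 * k ^ 2 + 4 * k + 1 := by
  rw [hfun, show (3 * k + 1 + 1) ^ 2 = 3 * (3 * k ^ 2 + 4 * k + 1) + 1 by ring]; omega

theorem hfun_three_mul_add_two (k : ℕ) : hfun (3 * k + 2) = 3 * k ^ 2 + 6 * k + 3 := by
  rw [hfun, show (3 * k + 2 + 1) ^ 2 = 3 * (3 * k ^ 2 + 6 * k + 3) by ring]; omega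

theorem colSum_succ (h : ℕ → ℕ) (n : ℕ) : colSum h (n + 1) = colSum h n + (2 * h n + 1) :=
  sum_range_succ _ _

theorem colSum_hfun_three_mul_add_one (k : ℕ) :
    colSum hfun (3 * k + 1) = colSum hfun (3 * k) + (6 * k ^ 2 + 4 * k + 1) := by
  rw [colSum_succ, hfun_three_mul]; ring

theorem colSum_hfun_three_mul_add_two (k : ℕ) :
    colSum hfun (3 * k + 2) = colSum hfun (3 * k) + (12 * k ^ 2 + 12 * k + 4) := by
  rw [colSum_succ, colSum_hfun_three_mul_add_one, hfun_three_mul_add_one]; ring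

theorem colSum_hfun_three_mul (k : ℕ) :
    colSum hfun (3 * k) = 6 * k ^ 3 + 3 * k ^ 2 + 2 * k := by
  induction k with
  | zero => rfl
  | succ k ih =>
    rw [show 3 * (k + 1) = 3 * k + 2 + 1 by ring, colSum_succ, colSum_hfun_three_mul_add_two, ih,
      hfun_three_mul_add_two]
    ring

/-- **Cardinality of `B_m` in each congruence class mod 3.** -/
theorem card_Bm_mod3 (k : ℕ) :
    (Bfin hfun (3 * k)).card = 12 * k ^ 3 + 12 * k ^ 2 + 8 * k + 1 ∧
    (Bfin hfun (3 * k + 1)).card = 12 * k ^ 3 + 24 * k ^ 2 + 20 * k + 5 ∧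
    (Bfin hfun (3 * k + 2)).card = 12 * k ^ 3 + 36 * k ^ 2 + 40 * k + 15 := by
  have h₁ := colSum_hfun_three_mul_add_one k
  have h₂ := colSum_hfun_three_mul_add_two k
  have h₃ := colSum_hfun_three_mul (k + 1)
  rw [show 3 * (k + 1) = 3 * k + 2 + 1 by ring] at h₃
  simp only [card_Bfin_eq_colSum, h₁, h₂, h₃, colSum_hfun_three_mul]
  exact ⟨by ring, by ring, by ring⟩

end Stmt6
end

section
/- The toppling operators commute: for any two vertices x, y ∈ G' and any pair (ρ, σ) of a rotor configuration and a particle configuration, F_x(F_y(ρ,σ)) = F_y(F_x(ρ,σ)). -/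
/-!
The toppling operators commute: for any two vertices `x, y ∈ G' = G ∖ S` and any
pair `(ρ, σ)` of a rotor configuration and a particle configuration,
`F_x (F_y (ρ, σ)) = F_y (F_x (ρ, σ))`.
-/

namespace Stmt10

variable {V : Type*} [DecidableEq V]

/-- Advance the rotor at `x` currently pointing at `y`: if `y = x_i` in the cyclic
ordering `c x` of the `deg x` neighbours of `x`, the rotor moves to
`x_{(i+1) mod deg x}`. -/
noncomputable def plus (G : SimpleGraph V) [G.LocallyFinite] (c : V → ℕ → V)
    (x y : V) : V :=
  if hi : ∃ i, i < G.degree x ∧ c x i = y then c x ((Nat.find hi + 1) % G.degree x)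
  else y

/-- The toppling operator `F_x`: first advance the rotor at `x`, then move one
particle from `x` to the vertex the rotor at `x` now points at. -/
noncomputable def topple (G : SimpleGraph V) [G.LocallyFinite] (c : V → ℕ → V)
    (x : V) (s : (V → V) × (V → ℤ)) : (V → V) × (V → ℤ) :=
  let ρ' := Function.update s.1 x (plus G c x (s.1 x))
  (ρ', fun z => s.2 z - (if z = x then 1 else 0) + (if z = ρ' x then 1 else 0))

/-- **Commutativity of the toppling operators.** -/
theorem topple_comm (G : SimpleGraph V) [G.LocallyFinite]
    (c : V → ℕ → V)
    (hc : ∀ x y : V, G.Adj x y ↔ ∃ i < G.degree x, c x i = y)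
    (hinj : ∀ x : V, Set.InjOn (c x) (Set.Iio (G.degree x)))
    (S : Set V)
    (x y : V) (hx : x ∉ S) (hy : y ∉ S)
    (ρ : V → V) (hρ : ∀ z ∉ S, G.Adj z (ρ z))
    (σ : V → ℤ) (hσ : (Function.support σ).Finite) :
    topple G c x (topple G c y (ρ, σ)) = topple G c y (topple G c x (ρ, σ)) := by
  rcases eq_or_ne x y with rfl | hxy
  · rfl
  simp only [topple]
  refine Prod.ext ?_ ?_
  · simp only [Function.update_of_ne hxy, Function.update_of_ne hxy.symm]
    exact Function.update_comm hxy.symm _ _ _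
  · funext z
    simp only [Function.update_of_ne hxy, Function.update_of_ne hxy.symm,
      Function.update_self]
    ring

end Stmt10
end

section
/- Let B be a finite connected graph with a nonempty sink set S and B° = B∖S, with a cyclic ordering of the neighbours of each vertex of B°. For every x ∈ B°: starting from any rotor configuration ρ on B° with a single particle at x, the rotor-router walk (at each step, advance the rotor at the current vertex to the next neighbour in its cyclic order and move the particle there) reaches S after finitely many steps; and the particle addition operator E_x, which sends ρ to the rotor configuration obtained when the particle first reaches S, is a permutation of the set of acyclic rotor configurations on B°. -/
/-!
On a finite connected graph `B` with a nonempty sink set `S` and `B° = B ∖ S`: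
for every `x ∈ B°`, a rotor-router walk started at `x` from any rotor
configuration reaches `S` after finitely many steps, and the particle addition
operator `E_x` (sending a rotor configuration `ρ` to the rotor configuration
obtained when a particle started at `x` first reaches `S`) is a permutation of
the set of acyclic rotor configurations on `B°`.
-/

set_option linter.unusedSectionVars false

namespace Stmt11

variable {V : Type*} [Fintype V] [DecidableEq V]

/-- Advance the rotor at `x` currently pointing at `y`: if `y = x_i` in the cyclic
ordering `c x` of the `deg x` neighbours of `x`, the rotor moves to
`x_{(i+1) mod deg x}`. -/
def plus (G : SimpleGraph V) [DecidableRel G.Adj] (c : V → ℕ → V)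
    (x y : V) : V :=
  if hi : ∃ i, i < G.degree x ∧ c x i = y then c x ((Nat.find hi + 1) % G.degree x)
  else y

/-- One step of a rotor-router walk with absorbing sinks: if the current position
is a sink, nothing happens; otherwise the rotor there is advanced and the
particle moves to where it now points. -/
def estep (G : SimpleGraph V) [DecidableRel G.Adj] (c : V → ℕ → V)
    (S : Finset V) (s : V × (V → V)) : V × (V → V) :=
  if s.1 ∈ S then s
  else
    let ρ' := Function.update s.2 s.1 (plus G c s.1 (s.2 s.1))
    (ρ' s.1, ρ')

/-- `ρ` is a rotor configuration on `B° = V ∖ S`: it assigns to each vertex of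
`B°` one of its neighbours (and is the identity on `S`, as a normalization). -/
def IsCfg (G : SimpleGraph V) (S : Finset V) (ρ : V → V) : Prop :=
  ∀ z : V, (z ∉ S → G.Adj z (ρ z)) ∧ (z ∈ S → ρ z = z)

/-- A rotor configuration `ρ` is acyclic on the vertex set `A` if the directed
graph on `A` with edge set `{(z, ρ z) : z ∈ A}` contains no directed cycle. -/
def AcyclicOn (A : Set V) (ρ : V → V) : Prop :=
  ¬ ∃ (z : V) (n : ℕ), 0 < n ∧ (∀ i < n, ρ^[i] z ∈ A) ∧ ρ^[n] z = z

open Classical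

/-- The particle addition operator `E_x`: start one particle at `x`, let it
perform a rotor-router walk until it first reaches the sink set `S`, and return
the rotor configuration at that moment. -/
noncomputable def Ex (G : SimpleGraph V) [DecidableRel G.Adj] (c : V → ℕ → V)
    (S : Finset V) (x : V) (ρ : V → V) : V → V :=
  if hex : ∃ t, ((estep G c S)^[t] (x, ρ)).1 ∈ S then
    ((estep G c S)^[Nat.find hex] (x, ρ)).2
  else ρ

/-! ### Auxiliary machinery -/

/-- Retreat the rotor at `u`: the inverse of `plus`. -/
noncomputable def minus (G : SimpleGraph V) [DecidableRel G.Adj] (c : V → ℕ → V)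
    (u y : V) : V :=
  if hi : ∃ i, i < G.degree u ∧ c u i = y then
    c u ((Nat.find hi + (G.degree u - 1)) % G.degree u)
  else y

/-- The previous position of the particle, reconstructed from the current state. -/
noncomputable def revAux (S : Finset V) (x : V) (s : V × (V → V)) : V :=
  if h1 : s.1 ∉ S ∧ ∃ k, 0 < k ∧ s.2^[k] s.1 = s.1 then s.2^[Nat.find h1.2 - 1] s.1
  else if h2 : ∃ m, 0 < m ∧ s.2^[m] x = s.1 then s.2^[Nat.find h2 - 1] x
  else s.1

/-- The reverse of one rotor-router step. -/
noncomputable def rev (G : SimpleGraph V) [DecidableRel G.Adj] (c : V → ℕ → V)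
    (S : Finset V) (x : V) (s : V × (V → V)) : V × (V → V) :=
  (revAux S x s,
    Function.update s.2 (revAux S x s) (minus G c (revAux S x s) (s.2 (revAux S x s))))

/-- The state invariant along a rotor-router run started at `x`. -/
def GoodAt (G : SimpleGraph V) (S : Finset V) (x : V) (s : V × (V → V)) : Prop :=
  IsCfg G S s.2 ∧
  (∃ m, s.2^[m] x = s.1 ∧ ∀ j < m, s.2^[j] x ∉ S) ∧
  (∀ z k, z ∉ S → 0 < k → s.2^[k] z = z → ∃ j < k, s.2^[j] z = s.1)

lemma iter_upd₁ (σ : V → V) (u a z : V) :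
    ∀ j, (∀ i, i < j → σ^[i] z ≠ u) → (Function.update σ u a)^[j] z = σ^[j] z
  | 0, _ => rfl
  | (j+1), h => by
    rw [Function.iterate_succ_apply', Function.iterate_succ_apply',
      iter_upd₁ σ u a z j (fun i hi => h i (Nat.lt_succ_of_lt hi))]
    exact Function.update_of_ne (h j (Nat.lt_succ_self j)) a σ

lemma iter_upd₂ (σ : V → V) (u a z : V) :
    ∀ j, (∀ i, i < j → (Function.update σ u a)^[i] z ≠ u) →
      (Function.update σ u a)^[j] z = σ^[j] z
  | 0, _ => rfl
  | (j+1), h => by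
    have ih := iter_upd₂ σ u a z j (fun i hi => h i (Nat.lt_succ_of_lt hi))
    rw [Function.iterate_succ_apply', Function.iterate_succ_apply', ih]
    have := h j (Nat.lt_succ_self j)
    rw [ih] at this
    exact Function.update_of_ne this a σ

section W

variable {G : SimpleGraph V} [DecidableRel G.Adj] {c : V → ℕ → V} {S : Finset V}
variable (hc : ∀ x y : V, G.Adj x y ↔ ∃ i < G.degree x, c x i = y)
variable (hinj : ∀ x : V, Set.InjOn (c x) (Set.Iio (G.degree x)))

lemma estep_sink {s : V × (V → V)} (h : s.1 ∈ S) : estep G c S s = s := by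
  simp [estep, h]

lemma estep_nonsink {s : V × (V → V)} (h : s.1 ∉ S) :
    estep G c S s = (plus G c s.1 (s.2 s.1),
      Function.update s.2 s.1 (plus G c s.1 (s.2 s.1))) := by
  simp [estep, h]

include hinj in
lemma plus_c' (u : V) {i : ℕ} (hi : i < G.degree u) :
    plus G c u (c u i) = c u ((i + 1) % G.degree u) := by
  have hex : ∃ j, j < G.degree u ∧ c u j = c u i := ⟨i, hi, rfl⟩
  have hsp := Nat.find_spec hex
  have : Nat.find hex = i := hinj u hsp.1 hi hsp.2
  rw [plus, dif_pos hex, this]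

include hinj in
lemma minus_c' (u : V) {i : ℕ} (hi : i < G.degree u) :
    minus G c u (c u i) = c u ((i + (G.degree u - 1)) % G.degree u) := by
  have hex : ∃ j, j < G.degree u ∧ c u j = c u i := ⟨i, hi, rfl⟩
  have hsp := Nat.find_spec hex
  have : Nat.find hex = i := hinj u hsp.1 hi hsp.2
  rw [minus, dif_pos hex, this]

include hinj in
lemma plus_iter (u : V) {i : ℕ} (hi : i < G.degree u) (j : ℕ) :
    (plus G c u)^[j] (c u i) = c u ((i + j) % G.degree u) := by
  induction j with
  | zero => simp [Nat.mod_eq_of_lt hi]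
  | succ j ih =>
    have hd : 0 < G.degree u := lt_of_le_of_lt (Nat.zero_le _) hi
    rw [Function.iterate_succ_apply', ih, plus_c' hinj u (Nat.mod_lt _ hd)]
    congr 1
    rw [Nat.mod_add_mod, Nat.add_assoc]

include hc hinj in
lemma plus_adj {u y : V} (h : G.Adj u y) : G.Adj u (plus G c u y) := by
  obtain ⟨i, hi, rfl⟩ := (hc u y).1 h
  have hd : 0 < G.degree u := lt_of_le_of_lt (Nat.zero_le _) hi
  rw [plus_c' hinj u hi]
  exact (hc u _).2 ⟨_, Nat.mod_lt _ hd, rfl⟩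

include hc hinj in
lemma minus_plus {u y : V} (h : G.Adj u y) : minus G c u (plus G c u y) = y := by
  obtain ⟨i, hi, rfl⟩ := (hc u y).1 h
  have hd : 0 < G.degree u := lt_of_le_of_lt (Nat.zero_le _) hi
  rw [plus_c' hinj u hi, minus_c' hinj u (Nat.mod_lt _ hd)]
  congr 1
  rw [Nat.mod_add_mod]
  have : i + 1 + (G.degree u - 1) = i + G.degree u := by omega
  rw [this, Nat.add_mod_right, Nat.mod_eq_of_lt hi]

lemma isCfg_fix {σ : V → V} (hσ : IsCfg G S σ) {z : V} (hz : z ∈ S) (n : ℕ) :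
    σ^[n] z = z := by
  induction n with
  | zero => rfl
  | succ n ih => rw [Function.iterate_succ_apply', ih]; exact (hσ z).2 hz

lemma isCfg_iter_mem {σ : V → V} (hσ : IsCfg G S σ) {z : V} {j k : ℕ}
    (hj : σ^[j] z ∈ S) (hjk : j ≤ k) : σ^[k] z ∈ S := by
  have : σ^[k] z = σ^[k - j] (σ^[j] z) := by
    rw [← Function.iterate_add_apply]; congr 1; omega
  rw [this, isCfg_fix hσ hj]; exact hj

include hc hinj in
lemma isCfg_estep {s : V × (V → V)} (hσ : IsCfg G S s.2) : IsCfg G S (estep G c S s).2 := by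
  by_cases h : s.1 ∈ S
  · rw [estep_sink h]; exact hσ
  · rw [estep_nonsink h]
    dsimp only
    intro z
    constructor
    · intro hz
      by_cases hzv : z = s.1
      · subst hzv
        rw [Function.update_self]
        exact plus_adj hc hinj ((hσ s.1).1 hz)
      · rw [Function.update_of_ne hzv]
        exact (hσ z).1 hz
    · intro hz
      have hzv : z ≠ s.1 := fun h' => h (h' ▸ hz)
      rw [Function.update_of_ne hzv]
      exact (hσ z).2 hz

include hc hinj in
lemma goodAt_estep {x : V} {s : V × (V → V)} (hg : GoodAt G S x s) (hpos : s.1 ∉ S) :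
    GoodAt G S x (estep G c S s) := by
  obtain ⟨v, σ⟩ := s
  simp only at hpos
  have hcfg' := isCfg_estep hc hinj (s := (v, σ)) hg.1
  rw [estep_nonsink hpos] at hcfg' ⊢
  set w := plus G c v (σ v) with hw
  set σ' := Function.update σ v w with hσ'def
  refine ⟨hcfg', ?_, ?_⟩
  · obtain ⟨m, hm, hmS⟩ := hg.2.1
    simp only at hm hmS
    have hhit : ∃ m, σ^[m] x = v := ⟨m, hm⟩
    have hm₀ : σ^[Nat.find hhit] x = v := Nat.find_spec hhit
    have hmin : ∀ j, j < Nat.find hhit → σ^[j] x ≠ v := fun j hj => Nat.find_min hhit hj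
    have hm₀le : Nat.find hhit ≤ m := Nat.find_min' hhit hm
    have hagree : ∀ j, j ≤ Nat.find hhit → σ'^[j] x = σ^[j] x :=
      fun j hj => iter_upd₁ σ v w x j (fun i hi => hmin i (lt_of_lt_of_le hi hj))
    refine ⟨Nat.find hhit + 1, ?_, ?_⟩
    · show σ'^[Nat.find hhit + 1] x = w
      rw [Function.iterate_succ_apply', hagree _ le_rfl, hm₀]
      exact Function.update_self v w σ
    · intro j hj
      have hj' : j ≤ Nat.find hhit := Nat.lt_succ_iff.1 hj
      show σ'^[j] x ∉ S
      rw [hagree j hj']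
      rcases lt_or_eq_of_le hj' with h' | h'
      · exact hmS j (lt_of_lt_of_le h' hm₀le)
      · rw [h', hm₀]; exact hpos
  · intro z k hz hk hcyc
    show ∃ j < k, σ'^[j] z = w
    by_cases hvorb : ∃ j, j < k ∧ σ'^[j] z = v
    · obtain ⟨j, hjk, hjv⟩ := hvorb
      have hnext : σ'^[j+1] z = w := by
        rw [Function.iterate_succ_apply', hjv]
        exact Function.update_self v w σ
      rcases lt_or_eq_of_le (Nat.succ_le_of_lt hjk) with h' | h'
      · exact ⟨j + 1, h', hnext⟩
      · refine ⟨0, hk, ?_⟩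
        have hzw : z = w := by rw [← hcyc, ← h']; exact hnext
        simpa using hzw
    · push_neg at hvorb
      have hag : ∀ j, j ≤ k → σ'^[j] z = σ^[j] z := fun j hj =>
        iter_upd₂ σ v w z j (fun i hi => hvorb i (lt_of_lt_of_le hi hj))
      have hcyc' : σ^[k] z = z := by rw [← hag k le_rfl]; exact hcyc
      obtain ⟨j, hjk, hjv⟩ := hg.2.2 z k hz hk hcyc'
      exact absurd (by rw [hag j hjk.le]; exact hjv) (hvorb j hjk)

lemma goodAt_init {x : V} {ρ : V → V} (hρ : IsCfg G S ρ)
    (hac : AcyclicOn {z : V | z ∉ S} ρ) : GoodAt G S x (x, ρ) := by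
  refine ⟨hρ, ⟨0, rfl, by omega⟩, ?_⟩
  intro z k hz hk hcyc
  exfalso
  refine hac ⟨z, k, hk, ?_, hcyc⟩
  intro i hi
  show ρ^[i] z ∉ S
  intro hmem
  exact hz (hcyc ▸ isCfg_iter_mem hρ hmem hi.le)

include hc hinj in
lemma goodAt_run {x : V} {ρ : V → V} (hρ : IsCfg G S ρ)
    (hac : AcyclicOn {z : V | z ∉ S} ρ) :
    ∀ t, (∀ t' < t, ((estep G c S)^[t'] (x, ρ)).1 ∉ S) →
      GoodAt G S x ((estep G c S)^[t] (x, ρ))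
  | 0, _ => goodAt_init hρ hac
  | (t+1), h => by
    rw [Function.iterate_succ_apply']
    exact goodAt_estep hc hinj
      (goodAt_run hρ hac t (fun t' ht' => h t' (Nat.lt_succ_of_lt ht')))
      (h t (Nat.lt_succ_self t))

include hc hinj in
lemma terminates (hconn : G.Connected) (hS : S.Nonempty) (x : V) (ρ : V → V)
    (hρ : IsCfg G S ρ) : ∃ t, ((estep G c S)^[t] (x, ρ)).1 ∈ S := by
  by_contra hno
  push_neg at hno
  set s : ℕ → V × (V → V) := fun t => (estep G c S)^[t] (x, ρ) with hs
  have hstep : ∀ t, s (t + 1) = estep G c S (s t) :=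
    fun t => Function.iterate_succ_apply' (estep G c S) t _
  have hcfg : ∀ t, IsCfg G S (s t).2 := by
    intro t; induction t with
    | zero => exact hρ
    | succ t ih => rw [hstep]; exact isCfg_estep hc hinj ih
  obtain ⟨t1, p, hp, hper1⟩ : ∃ t1 p, 0 < p ∧ s (t1 + p) = s t1 := by
    obtain ⟨a, b, hne, heq⟩ := Finite.exists_ne_map_eq_of_infinite s
    rcases hne.lt_or_gt with h | h
    · exact ⟨a, b - a, by omega, by rw [show a + (b - a) = b by omega]; exact heq.symm⟩
    · exact ⟨b, a - b, by omega, by rw [show b + (a - b) = a by omega]; exact heq⟩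
  have hper : ∀ k, s (t1 + k + p) = s (t1 + k) := by
    intro k; induction k with
    | zero => simpa using hper1
    | succ k ih =>
      have e1 : t1 + (k + 1) + p = (t1 + k + p) + 1 := by omega
      have e2 : t1 + (k + 1) = (t1 + k) + 1 := by omega
      rw [e1, e2, hstep, hstep, ih]
  have hper' : ∀ t, t1 ≤ t → s (t + p) = s t := by
    intro t ht
    have := hper (t - t1)
    rw [show t1 + (t - t1) = t by omega] at this
    exact this
  have hmul : ∀ t, t1 ≤ t → ∀ n, s (t + n * p) = s t := by
    intro t ht n
    induction n with
    | zero => simp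
    | succ n ih =>
      rw [Nat.succ_mul, ← Nat.add_assoc, hper' _ (le_trans ht (Nat.le_add_right _ _)), ih]
  set A : V → Prop := fun u => ∃ t, t1 ≤ t ∧ (s t).1 = u with hA
  have hrec : ∀ u, A u → ∀ t0, ∃ t, t0 ≤ t ∧ t1 ≤ t ∧ (s t).1 = u := by
    rintro u ⟨t, ht1, htu⟩ t0
    have hle : t0 ≤ t0 * p := Nat.le_mul_of_pos_right t0 hp
    refine ⟨t + t0 * p, le_trans hle (Nat.le_add_left _ _),
      le_trans ht1 (Nat.le_add_right _ _), ?_⟩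
    rw [hmul t ht1 t0]; exact htu
  have hother : ∀ t u, (s t).1 ≠ u → (s (t + 1)).2 u = (s t).2 u := by
    intro t u hne
    rw [hstep]
    by_cases hsink : (s t).1 ∈ S
    · rw [estep_sink hsink]
    · rw [estep_nonsink hsink]
      exact Function.update_of_ne (Ne.symm hne) _ _
  have hself : ∀ t, (s (t + 1)).2 ((s t).1) = plus G c (s t).1 ((s t).2 (s t).1)
      ∧ (s (t + 1)).1 = plus G c (s t).1 ((s t).2 (s t).1) := by
    intro t
    rw [hstep, estep_nonsink (hno t)]
    exact ⟨Function.update_self _ _ _, rfl⟩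
  have hadv : ∀ u t, A u → t1 ≤ t →
      ∃ t', t ≤ t' ∧ (s (t' + 1)).2 u = plus G c u ((s t).2 u) ∧
        (s (t' + 1)).1 = plus G c u ((s t).2 u) := by
    intro u t hAu ht
    obtain ⟨tv, htv, _, hvu⟩ := hrec u hAu t
    have hPex : ∃ k, (s (t + k)).1 = u :=
      ⟨tv - t, by rw [show t + (tv - t) = tv by omega]; exact hvu⟩
    have hspec : (s (t + Nat.find hPex)).1 = u := Nat.find_spec hPex
    have hmin : ∀ k, k < Nat.find hPex → (s (t + k)).1 ≠ u := fun k hk => Nat.find_min hPex hk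
    have hconst : ∀ k, k ≤ Nat.find hPex → (s (t + k)).2 u = (s t).2 u := by
      intro k hk
      induction k with
      | zero => rfl
      | succ k ih =>
        rw [show t + (k + 1) = (t + k) + 1 by omega, hother (t + k) u (hmin k (by omega))]
        exact ih (by omega)
    refine ⟨t + Nat.find hPex, Nat.le_add_right _ _, ?_, ?_⟩
    · have h2 := (hself (t + Nat.find hPex)).1
      rw [hspec] at h2
      rw [h2, hconst _ le_rfl]
    · have h1 := (hself (t + Nat.find hPex)).2
      rw [hspec] at h1
      rw [h1, hconst _ le_rfl]
  have horb : ∀ u, A u → ∀ j,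
      (∃ t, t1 ≤ t ∧ (s t).2 u = (plus G c u)^[j] ((s t1).2 u)) ∧
      (1 ≤ j → A ((plus G c u)^[j] ((s t1).2 u))) := by
    intro u hAu j
    induction j with
    | zero => exact ⟨⟨t1, le_rfl, rfl⟩, fun h => absurd h (by omega)⟩
    | succ j ih =>
      obtain ⟨⟨t, ht, hr⟩, _⟩ := ih
      obtain ⟨t', ht', h2, h1⟩ := hadv u t hAu ht
      rw [hr] at h2 h1
      rw [Function.iterate_succ_apply']
      exact ⟨⟨t' + 1, by omega, h2⟩, fun _ => ⟨t' + 1, by omega, h1⟩⟩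
  have hnbr : ∀ u, A u → ∀ w, G.Adj u w → A w := by
    intro u hAu w hadj
    obtain ⟨tu, htu, hu⟩ := hAu
    have huS : u ∉ S := hu ▸ hno tu
    have hadj0 : G.Adj u ((s t1).2 u) := ((hcfg t1) u).1 huS
    obtain ⟨i, hi, hci⟩ := (hc u _).1 hadj0
    obtain ⟨m, hm, hcm⟩ := (hc u w).1 hadj
    have hd : 0 < G.degree u := lt_of_le_of_lt (Nat.zero_le _) hi
    have hj1 : 1 ≤ G.degree u + m - i := by omega
    have hmod : (i + (G.degree u + m - i)) % G.degree u = m := by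
      rw [show i + (G.degree u + m - i) = G.degree u + m by omega, Nat.add_mod_left,
        Nat.mod_eq_of_lt hm]
    have hmem := (horb u ⟨tu, htu, hu⟩ (G.degree u + m - i)).2 hj1
    rw [← hci, plus_iter hinj u hi, hmod, hcm] at hmem
    exact hmem
  obtain ⟨s0, hs0⟩ := hS
  have hx1 : A ((s t1).1) := ⟨t1, le_rfl, rfl⟩
  have hreach : ∀ {a b : V}, G.Walk a b → A a → A b := by
    intro a b wlk
    induction wlk with
    | nil => exact id
    | cons h p ih => exact fun ha => ih (hnbr _ ha _ h)
  obtain ⟨wlk⟩ := hconn.preconnected ((s t1).1) s0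
  obtain ⟨ts, _, hts0⟩ := hreach wlk hx1
  exact hno ts (by rw [hts0]; exact hs0)

include hc hinj in
lemma rev_estep {x : V} (hx : x ∉ S) {s : V × (V → V)} (hg : GoodAt G S x s)
    (hpos : s.1 ∉ S) : rev G c S x (estep G c S s) = s := by
  obtain ⟨v, σ⟩ := s
  simp only at hpos
  rw [estep_nonsink hpos]
  dsimp only
  set w := plus G c v (σ v) with hw
  set σ' := Function.update σ v w with hσ'def
  have hσ'v : σ' v = w := Function.update_self v w σ
  have hadj : G.Adj v (σ v) := (hg.1 v).1 hpos
  obtain ⟨m, hm, hmS⟩ := hg.2.1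
  simp only at hm hmS
  have hhit : ∃ m', σ^[m'] x = v := ⟨m, hm⟩
  have hm₀ : σ^[Nat.find hhit] x = v := Nat.find_spec hhit
  have hm₀le : Nat.find hhit ≤ m := Nat.find_min' hhit hm
  have hminv : ∀ j, j < Nat.find hhit → σ^[j] x ≠ v := fun j hj => Nat.find_min hhit hj
  have hminS : ∀ j, j < Nat.find hhit → σ^[j] x ∉ S :=
    fun j hj => hmS j (lt_of_lt_of_le hj hm₀le)
  have hagree : ∀ j, j ≤ Nat.find hhit → σ'^[j] x = σ^[j] x :=
    fun j hj => iter_upd₁ σ v w x j (fun i hi => hminv i (lt_of_lt_of_le hi hj))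
  have hup : σ'^[Nat.find hhit + 1] x = w := by
    rw [Function.iterate_succ_apply', hagree _ le_rfl, hm₀, hσ'v]
  have hgoal : revAux S x (w, σ') = v := by
    unfold revAux
    dsimp only
    by_cases hC : w ∉ S ∧ ∃ k, 0 < k ∧ σ'^[k] w = w
    · rw [dif_pos hC]
      have hk₀ : 0 < Nat.find hC.2 ∧ σ'^[Nat.find hC.2] w = w := Nat.find_spec hC.2
      have hvorb : ∃ j, j < Nat.find hC.2 ∧ σ'^[j] w = v := by
        by_contra hnone
        push_neg at hnone
        have hag : ∀ j, j ≤ Nat.find hC.2 → σ'^[j] w = σ^[j] w := fun j hj =>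
          iter_upd₂ σ v w w j (fun i hi => hnone i (lt_of_lt_of_le hi hj))
        have hσcyc : σ^[Nat.find hC.2] w = w := by rw [← hag _ le_rfl]; exact hk₀.2
        obtain ⟨j, hj, hjv⟩ := hg.2.2 w (Nat.find hC.2) hC.1 hk₀.1 hσcyc
        exact hnone j hj (by rw [hag j hj.le]; exact hjv)
      obtain ⟨j, hjk, hjv⟩ := hvorb
      have hjex : ∃ j', σ'^[j'] w = v := ⟨j, hjv⟩
      have hj₁ : σ'^[Nat.find hjex] w = v := Nat.find_spec hjex
      have hj₁le : Nat.find hjex ≤ j := Nat.find_min' hjex hjv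
      have hnext : σ'^[Nat.find hjex + 1] w = w := by
        rw [Function.iterate_succ_apply', hj₁, hσ'v]
      have hk₀le : Nat.find hC.2 ≤ Nat.find hjex + 1 :=
        Nat.find_min' hC.2 ⟨Nat.succ_pos _, hnext⟩
      have hkeq : Nat.find hC.2 = Nat.find hjex + 1 := by omega
      rw [hkeq]
      simpa using hj₁
    · rw [dif_neg hC]
      have h2 : ∃ m', 0 < m' ∧ σ'^[m'] x = w := ⟨Nat.find hhit + 1, Nat.succ_pos _, hup⟩
      rw [dif_pos h2]
      have hm₁ : 0 < Nat.find h2 ∧ σ'^[Nat.find h2] x = w := Nat.find_spec h2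
      have hm₁le : Nat.find h2 ≤ Nat.find hhit + 1 :=
        Nat.find_min' h2 ⟨Nat.succ_pos _, hup⟩
      have hm₁eq : Nat.find h2 = Nat.find hhit + 1 := by
        by_contra hne
        have hm₁le' : Nat.find h2 ≤ Nat.find hhit := by omega
        have hσm₁ : σ^[Nat.find h2] x = w := by rw [← hagree _ hm₁le']; exact hm₁.2
        rcases lt_or_eq_of_le hm₁le' with hlt | heq
        · by_cases hwS : w ∈ S
          · exact (hminS _ hlt) (by rw [hσm₁]; exact hwS)
          · apply hC
            refine ⟨hwS, ?_⟩
            have hwv : σ^[Nat.find hhit - Nat.find h2] w = v := by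
              have hiter := Function.iterate_add_apply σ
                (Nat.find hhit - Nat.find h2) (Nat.find h2) x
              rw [hσm₁,
                show Nat.find hhit - Nat.find h2 + Nat.find h2 = Nat.find hhit by omega,
                hm₀] at hiter
              exact hiter.symm
            have hqex : ∃ q, σ^[q] w = v := ⟨_, hwv⟩
            have hq : σ^[Nat.find hqex] w = v := Nat.find_spec hqex
            have hqmin : ∀ i, i < Nat.find hqex → σ^[i] w ≠ v :=
              fun i hi => Nat.find_min hqex hi
            have hagw : σ'^[Nat.find hqex] w = σ^[Nat.find hqex] w :=
              iter_upd₁ σ v w w _ (fun i hi => hqmin i hi)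
            refine ⟨Nat.find hqex + 1, Nat.succ_pos _, ?_⟩
            rw [Function.iterate_succ_apply', hagw, hq, hσ'v]
        · have hw_eq_v : w = v := by rw [← hσm₁, heq]; exact hm₀
          apply hC
          constructor
          · rw [hw_eq_v]; exact hpos
          · refine ⟨1, Nat.one_pos, ?_⟩
            rw [Function.iterate_one, hw_eq_v, hσ'v, hw_eq_v]
      rw [hm₁eq]
      have : σ'^[Nat.find hhit + 1 - 1] x = v := by
        simpa using (hagree _ le_rfl).trans hm₀
      exact this
  have hrw : rev G c S x (w, σ') = (v, Function.update σ' v (minus G c v (σ' v))) := by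
    rw [rev]
    dsimp only
    rw [hgoal]
  rw [hrw, hσ'v, hw, minus_plus hc hinj hadj, hσ'def, Function.update_idem,
    Function.update_eq_self]

include hc hinj in
lemma rev_iter {x : V} (hx : x ∉ S) {ρ : V → V} (hρ : IsCfg G S ρ)
    (hac : AcyclicOn {z : V | z ∉ S} ρ) {T : ℕ}
    (hT : ∀ t' < T, ((estep G c S)^[t'] (x, ρ)).1 ∉ S) :
    ∀ j, j ≤ T →
      (rev G c S x)^[j] ((estep G c S)^[T] (x, ρ)) = (estep G c S)^[T - j] (x, ρ) := by
  intro j hj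
  induction j with
  | zero => simp
  | succ j ih =>
    have hjT : j < T := hj
    rw [Function.iterate_succ_apply', ih (le_of_lt hjT)]
    have hTj : T - j = (T - (j + 1)) + 1 := by omega
    rw [hTj, Function.iterate_succ_apply']
    exact rev_estep hc hinj hx
      (goodAt_run hc hinj hρ hac _ (fun t' ht' => hT t' (by omega)))
      (hT _ (by omega))

include hc hinj in
lemma run_inj {x : V} (hx : x ∉ S) {ρ₁ ρ₂ : V → V}
    (h₁ : IsCfg G S ρ₁) (ha₁ : AcyclicOn {z : V | z ∉ S} ρ₁)
    (h₂ : IsCfg G S ρ₂) (ha₂ : AcyclicOn {z : V | z ∉ S} ρ₂)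
    {T₁ T₂ : ℕ}
    (hT₁S : ((estep G c S)^[T₁] (x, ρ₁)).1 ∈ S)
    (hT₁ : ∀ t < T₁, ((estep G c S)^[t] (x, ρ₁)).1 ∉ S)
    (hT₂S : ((estep G c S)^[T₂] (x, ρ₂)).1 ∈ S)
    (hT₂ : ∀ t < T₂, ((estep G c S)^[t] (x, ρ₂)).1 ∉ S)
    (hle : T₁ ≤ T₂)
    (heq : ((estep G c S)^[T₁] (x, ρ₁)).2 = ((estep G c S)^[T₂] (x, ρ₂)).2) :
    ρ₁ = ρ₂ := by
  have hg₁ := goodAt_run hc hinj h₁ ha₁ T₁ hT₁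
  have hg₂ := goodAt_run hc hinj h₂ ha₂ T₂ hT₂
  obtain ⟨m₁, hm₁, hm₁S⟩ := hg₁.2.1
  obtain ⟨m₂, hm₂, hm₂S⟩ := hg₂.2.1
  rw [heq] at hm₁ hm₁S
  have hmeq : m₁ = m₂ := by
    by_contra hne
    rcases Nat.lt_or_ge m₁ m₂ with h | h
    · exact (hm₂S m₁ h) (by rw [hm₁]; exact hT₁S)
    · have h' : m₂ < m₁ := by omega
      exact (hm₁S m₂ h') (by rw [hm₂]; exact hT₂S)
  have hposeq : ((estep G c S)^[T₁] (x, ρ₁)).1 = ((estep G c S)^[T₂] (x, ρ₂)).1 := by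
    rw [← hm₁, hmeq, hm₂]
  have hfin : (estep G c S)^[T₁] (x, ρ₁) = (estep G c S)^[T₂] (x, ρ₂) :=
    Prod.ext hposeq heq
  have e₁ := rev_iter hc hinj hx h₁ ha₁ hT₁ T₁ le_rfl
  have e₂ := rev_iter hc hinj hx h₂ ha₂ hT₂ T₁ hle
  rw [hfin] at e₁
  rw [e₁] at e₂
  simp only [Nat.sub_self, Function.iterate_zero_apply] at e₂
  rcases Nat.eq_or_lt_of_le hle with heqT | hltT
  · rw [← heqT, Nat.sub_self] at e₂
    simpa using e₂
  · exfalso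
    set t := T₂ - T₁ - 1 with ht_def
    have htT : t < T₂ := by omega
    have hstep2 : estep G c S ((estep G c S)^[t] (x, ρ₂)) = (x, ρ₁) := by
      rw [← Function.iterate_succ_apply' (estep G c S) t (x, ρ₂),
        show t.succ = T₂ - T₁ by omega]
      exact e₂.symm
    have hg := goodAt_run hc hinj h₂ ha₂ t (fun t' ht' => hT₂ t' (by omega))
    have hpos : ((estep G c S)^[t] (x, ρ₂)).1 ∉ S := hT₂ t (by omega)
    set u := ((estep G c S)^[t] (x, ρ₂)).1 with hu_def
    set σ := ((estep G c S)^[t] (x, ρ₂)).2 with hσ_def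
    rw [estep_nonsink hpos] at hstep2
    have hxw : plus G c u (σ u) = x := congrArg Prod.fst hstep2
    have hρw : Function.update σ u (plus G c u (σ u)) = ρ₁ := congrArg Prod.snd hstep2
    rw [hxw] at hρw
    obtain ⟨m, hm, hmS⟩ := hg.2.1
    have hhit : ∃ m', σ^[m'] x = u := ⟨m, hm⟩
    have hm₀ : σ^[Nat.find hhit] x = u := Nat.find_spec hhit
    have hm₀le : Nat.find hhit ≤ m := Nat.find_min' hhit hm
    have hminv : ∀ j, j < Nat.find hhit → σ^[j] x ≠ u := fun j hj => Nat.find_min hhit hj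
    have hminS : ∀ j, j < Nat.find hhit → σ^[j] x ∉ S :=
      fun j hj => hmS j (lt_of_lt_of_le hj hm₀le)
    have hagree : ∀ j, j ≤ Nat.find hhit → ρ₁^[j] x = σ^[j] x := by
      intro j hj
      rw [← hρw]
      exact iter_upd₁ σ u x x j (fun i hi => hminv i (lt_of_lt_of_le hi hj))
    refine ha₁ ⟨x, Nat.find hhit + 1, Nat.succ_pos _, ?_, ?_⟩
    · intro i hi
      have hi' : i ≤ Nat.find hhit := by omega
      show ρ₁^[i] x ∉ S
      rw [hagree i hi']
      rcases lt_or_eq_of_le hi' with h' | h'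
      · exact hminS i h'
      · rw [h', hm₀]; exact hpos
    · rw [Function.iterate_succ_apply', hagree _ le_rfl, hm₀, ← hρw,
        Function.update_self]

end W

/-- **Termination of the rotor-router walk, and `E_x` is a permutation of the
acyclic rotor configurations on `B°`.** -/
theorem particle_addition_permutation (G : SimpleGraph V) [DecidableRel G.Adj]
    (hconn : G.Connected)
    (c : V → ℕ → V)
    (hc : ∀ x y : V, G.Adj x y ↔ ∃ i < G.degree x, c x i = y)
    (hinj : ∀ x : V, Set.InjOn (c x) (Set.Iio (G.degree x)))
    (S : Finset V) (hS : S.Nonempty)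
    (x : V) (hx : x ∉ S) :
    (∀ ρ : V → V, IsCfg G S ρ → ∃ t, ((estep G c S)^[t] (x, ρ)).1 ∈ S) ∧
    Set.BijOn (Ex G c S x)
      {ρ | IsCfg G S ρ ∧ AcyclicOn {z | z ∉ S} ρ}
      {ρ | IsCfg G S ρ ∧ AcyclicOn {z | z ∉ S} ρ} := by
  have hterm : ∀ ρ : V → V, IsCfg G S ρ → ∃ t, ((estep G c S)^[t] (x, ρ)).1 ∈ S :=
    fun ρ hρ => terminates hc hinj hconn hS x ρ hρ
  refine ⟨hterm, ?_⟩
  have hmaps : Set.MapsTo (Ex G c S x)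
      {ρ | IsCfg G S ρ ∧ AcyclicOn {z | z ∉ S} ρ}
      {ρ | IsCfg G S ρ ∧ AcyclicOn {z | z ∉ S} ρ} := by
    rintro ρ ⟨hρ, hac⟩
    have hex := hterm ρ hρ
    have hEx : Ex G c S x ρ = ((estep G c S)^[Nat.find hex] (x, ρ)).2 := by
      rw [Ex, dif_pos hex]
    have hTS : ((estep G c S)^[Nat.find hex] (x, ρ)).1 ∈ S := Nat.find_spec hex
    have hT : ∀ t < Nat.find hex, ((estep G c S)^[t] (x, ρ)).1 ∉ S :=
      fun t ht => Nat.find_min hex ht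
    have hg := goodAt_run hc hinj hρ hac (Nat.find hex) hT
    rw [Set.mem_setOf_eq, hEx]
    refine ⟨hg.1, ?_⟩
    rintro ⟨z, n, hn, hmem, hfix⟩
    have hz : z ∉ S := hmem 0 hn
    obtain ⟨j, hj, hjv⟩ := hg.2.2 z n hz hn hfix
    exact (hmem j hj) (by rw [hjv]; exact hTS)
  have hinjon : Set.InjOn (Ex G c S x)
      {ρ | IsCfg G S ρ ∧ AcyclicOn {z | z ∉ S} ρ} := by
    rintro ρ₁ ⟨h₁, ha₁⟩ ρ₂ ⟨h₂, ha₂⟩ heq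
    have hex₁ := hterm ρ₁ h₁
    have hex₂ := hterm ρ₂ h₂
    rw [Ex, dif_pos hex₁, Ex, dif_pos hex₂] at heq
    have hT₁S := Nat.find_spec hex₁
    have hT₂S := Nat.find_spec hex₂
    have hT₁ : ∀ t < Nat.find hex₁, ((estep G c S)^[t] (x, ρ₁)).1 ∉ S :=
      fun t ht => Nat.find_min hex₁ ht
    have hT₂ : ∀ t < Nat.find hex₂, ((estep G c S)^[t] (x, ρ₂)).1 ∉ S :=
      fun t ht => Nat.find_min hex₂ ht
    rcases le_total (Nat.find hex₁) (Nat.find hex₂) with hle | hle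
    · exact run_inj hc hinj hx h₁ ha₁ h₂ ha₂ hT₁S hT₁ hT₂S hT₂ hle heq
    · exact (run_inj hc hinj hx h₂ ha₂ h₁ ha₁ hT₂S hT₂ hT₁S hT₁ hle heq.symm).symm
  exact (Set.Finite.injOn_iff_bijOn_of_mapsTo (Set.toFinite _) hmaps).1 hinjon

end Stmt11
end

section
/- Let e : ℕ → ℝ satisfy e(0) = e(1) and, for all x ≥ 1, e(x+1)·(x+1)² + e(x−1)·(x−1)² = 2·e(x)·(x²+1). Then e is constant: e(x) = e(0) for all x ∈ ℕ. -/
/-!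
If `e : ℕ → ℝ` satisfies `e 0 = e 1` and, for all `x ≥ 1`,
`e(x+1)(x+1)² + e(x-1)(x-1)² = 2 e(x)(x²+1)`, then `e` is constant.
-/

theorem constant_of_sq_recursion (e : ℕ → ℝ) (h01 : e 0 = e 1)
    (hrec : ∀ x : ℕ, 1 ≤ x →
      e (x + 1) * ((x : ℝ) + 1) ^ 2 + e (x - 1) * ((x : ℝ) - 1) ^ 2 =
        2 * e x * ((x : ℝ) ^ 2 + 1)) :
    ∀ x : ℕ, e x = e 0 := by
  have key : ∀ x : ℕ, e x = e 0 ∧ e (x + 1) = e 0 := by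
    intro x
    induction x with
    | zero => exact ⟨rfl, h01.symm⟩
    | succ n ih =>
      refine ⟨ih.2, ?_⟩
      have h := hrec (n + 1) (Nat.le_add_left 1 n)
      have hn : e n = e 0 := ih.1
      have hn1 : e (n + 1) = e 0 := ih.2
      simp only [Nat.add_sub_cancel] at h
      push_cast at h
      rw [hn, hn1] at h
      have hne : ((n : ℝ) + 1 + 1) ^ 2 ≠ 0 := by positivity
      have : e (n + 1 + 1) * ((n : ℝ) + 1 + 1) ^ 2 = e 0 * ((n : ℝ) + 1 + 1) ^ 2 := by
        nlinarith [h]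
      exact mul_right_cancel₀ hne this
  exact fun x => (key x).1
end

section
/- Let h(x) = ⌊(x+1)²/3⌋ and let e : ℕ → ℝ be defined by e(0) = e(1) = 1 and, for x ≥ 1, e(x+1)·h(x+1) = 2·e(x)·(h(x)+1) − e(x−1)·h(x−1). Then there exists a constant c < 1/2 such that e(x)/x → c as x → ∞. -/
/-!
Multiplying out, the recursion says that the second difference of `e · h` is `2e`; hence `e · h`
increases and `e > 0`. The sequence `D x = x - [x ≡ 2 mod 3] / x` is a supersolution of the
recursion, `2 (h x + 1) D x ≤ h (x - 1) D (x - 1) + h (x + 1) D (x + 1)` (a polynomial inequality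
in each residue class mod 3), and comparing `e` with it shows that `e / D` is nonincreasing from
`x = 1` on. Being positive, `e / D` converges to some `c`, and so does `e x / x` because
`D x / x → 1`. Exact evaluation of the recursion gives `e 19 / D 19 = e 19 / 19 < 1/2`, so `c < 1/2`.
-/

namespace Stmt15

/-- `h x = ⌊(x+1)²/3⌋`. -/
def hfun (x : ℕ) : ℕ := (x + 1) ^ 2 / 3

open Filter Topology

section Recurrence

variable {e w D : ℕ → ℝ}

theorem pos_of_recurrence
    (hrec : ∀ n, e (n + 2) * w (n + 2) = 2 * e (n + 1) * (w (n + 1) + 1) - e n * w n)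
    (hw : ∀ n, 0 ≤ w n) (he : 0 < e 1) (hbase : e 0 * w 0 < e 1 * w 1) (n : ℕ) :
    0 < e (n + 1) := by
  suffices ∀ n, 0 < e (n + 1) ∧ e n * w n < e (n + 1) * w (n + 1) from (this n).1
  intro n
  induction n with
  | zero => exact ⟨he, hbase⟩
  | succ n ih =>
    obtain ⟨hpos, hlt⟩ := ih
    -- the second difference of `e * w` is `2 * e`
    have hgrow : e (n + 1) * w (n + 1) < e (n + 2) * w (n + 2) := by linarith [hrec n]
    have hprod : 0 < e (n + 2) * w (n + 2) := (mul_nonneg hpos.le (hw _)).trans_lt hgrow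
    exact ⟨pos_of_mul_pos_left hprod (hw _), hgrow⟩

theorem div_le_div_of_supersolution
    (hrec : ∀ n, e (n + 2) * w (n + 2) = 2 * e (n + 1) * (w (n + 1) + 1) - e n * w n)
    {n : ℕ} (hw₀ : 0 ≤ w n) (hw₂ : 0 < w (n + 2)) (he : 0 ≤ e (n + 1))
    (hD₀ : 0 < D n) (hD₁ : 0 < D (n + 1)) (hD₂ : 0 < D (n + 2))
    (hsuper : 2 * (w (n + 1) + 1) * D (n + 1) ≤ w n * D n + w (n + 2) * D (n + 2))
    (hprev : e (n + 1) / D (n + 1) ≤ e n / D n) :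
    e (n + 2) / D (n + 2) ≤ e (n + 1) / D (n + 1) := by
  set r := e (n + 1) / D (n + 1)
  have hr : 0 ≤ r := div_nonneg he hD₁.le
  have he₀ : r * D n ≤ e n := (le_div_iff₀ hD₀).1 hprev
  have he₁ : e (n + 1) = r * D (n + 1) := (div_mul_cancel₀ _ hD₁.ne').symm
  have key : e (n + 2) * w (n + 2) ≤ r * D (n + 2) * w (n + 2) :=
    calc e (n + 2) * w (n + 2) = 2 * e (n + 1) * (w (n + 1) + 1) - e n * w n := hrec n
      _ ≤ 2 * e (n + 1) * (w (n + 1) + 1) - r * D n * w n := by gcongr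
      _ = r * (2 * (w (n + 1) + 1) * D (n + 1) - w n * D n) := by rw [he₁]; ring
      _ ≤ r * (w (n + 2) * D (n + 2)) := by gcongr; linarith
      _ = r * D (n + 2) * w (n + 2) := by ring
  exact (div_le_iff₀ hD₂).2 (le_of_mul_le_mul_right key hw₂)

theorem antitone_div_of_supersolution
    (hrec : ∀ n, e (n + 2) * w (n + 2) = 2 * e (n + 1) * (w (n + 1) + 1) - e n * w n)
    (hw : ∀ n, 0 < w (n + 1)) (he : ∀ n, 0 < e (n + 1)) (hD : ∀ n, 0 < D (n + 1))
    (hsuper : ∀ n,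
      2 * (w (n + 2) + 1) * D (n + 2) ≤ w (n + 1) * D (n + 1) + w (n + 3) * D (n + 3))
    (hbase : e 2 / D 2 ≤ e 1 / D 1) :
    Antitone fun n ↦ e (n + 1) / D (n + 1) := by
  refine antitone_nat_of_succ_le fun n ↦ ?_
  induction n with
  | zero => exact hbase
  | succ n ih =>
    exact div_le_div_of_supersolution hrec (hw _).le (hw _) (he _).le (hD _) (hD _) (hD _)
      (hsuper n) ih

end Recurrence

theorem three_mul_hfun (n : ℕ) : 3 * hfun n + (if n % 3 = 2 then 0 else 1) = (n + 1) ^ 2 := by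
  have hmod : (n + 1) ^ 2 % 3 = if n % 3 = 2 then 0 else 1 := by
    rw [Nat.pow_mod, Nat.add_mod]
    rcases (by omega : n % 3 = 0 ∨ n % 3 = 1 ∨ n % 3 = 2) with h | h | h <;> simp [h]
  rw [hfun, ← hmod, Nat.div_add_mod]

theorem cast_hfun (n : ℕ) :
    (hfun n : ℝ) = (n ^ 2 + 2 * n + if n % 3 = 2 then 1 else 0) / 3 := by
  have h := congrArg (Nat.cast : ℕ → ℝ) (three_mul_hfun n)
  split_ifs at h ⊢ <;> push_cast at h <;> linarith

theorem hfun_succ_pos (n : ℕ) : 0 < (hfun (n + 1) : ℝ) := by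
  rw [cast_hfun]
  positivity

noncomputable def supersolution (n : ℕ) : ℝ := n - (if n % 3 = 2 then 1 else 0) / n

theorem supersolution_pos (n : ℕ) : 0 < supersolution (n + 1) := by
  rcases n with _ | n
  · norm_num [supersolution]
  · have hk : (2 : ℝ) ≤ ((n + 2 : ℕ) : ℝ) := by exact_mod_cast (by omega : 2 ≤ n + 2)
    have hδ : (if (n + 2) % 3 = 2 then 1 else 0 : ℝ) / ((n + 2 : ℕ) : ℝ) ≤ 1 := by
      rw [div_le_one (by linarith)]
      split_ifs <;> linarith
    show 0 < ((n + 2 : ℕ) : ℝ) - _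
    linarith

theorem supersolution_rec_le (n : ℕ) :
    2 * ((hfun (n + 2) : ℝ) + 1) * supersolution (n + 2) ≤
      hfun (n + 1) * supersolution (n + 1) + hfun (n + 3) * supersolution (n + 3) := by
  obtain ⟨m, rfl | rfl | rfl⟩ : ∃ m, n = 3 * m ∨ n = 3 * m + 1 ∨ n = 3 * m + 2 :=
    ⟨n / 3, by omega⟩
  all_goals
    simp only [cast_hfun, supersolution]
    norm_num [Nat.add_mod]
    have hm : (0 : ℝ) ≤ m := m.cast_nonneg
    field_simp
    nlinarith [mul_nonneg hm hm, mul_nonneg (mul_nonneg hm hm) hm]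

theorem tendsto_supersolution_div_self :
    Tendsto (fun n : ℕ ↦ supersolution n / n) atTop (𝓝 1) := by
  have hδ : Tendsto (fun n : ℕ ↦ (if n % 3 = 2 then 1 else 0 : ℝ) / n ^ 2) atTop (𝓝 0) := by
    refine squeeze_zero (fun n ↦ by positivity) (fun n ↦ ?_)
      (by simpa using (tendsto_one_div_atTop_nhds_zero_nat (𝕜 := ℝ)).pow 2)
    rw [← one_div]
    gcongr
    split_ifs <;> norm_num
  have h := (tendsto_const_nhds (x := (1 : ℝ)) (f := atTop)).sub hδ
  rw [sub_zero] at h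
  refine h.congr' ?_
  filter_upwards [eventually_ne_atTop 0] with n hn
  simp only [supersolution]
  field_simp

/-- `(e (n + 1), e (n + 2))` for the solution with `e 1 = 1`, evaluated in `ℚ`. -/
def eValues : ℕ → ℚ × ℚ
  | 0 => (1, 4 / 3)
  | n + 1 =>
    match eValues n with
    | (a, b) => (b, (2 * b * (hfun (n + 2) + 1) - a * hfun (n + 1)) / hfun (n + 3))

theorem eq_eValues {e : ℕ → ℝ} (h1 : e 1 = 1)
    (hrec : ∀ n, e (n + 2) * hfun (n + 2) = 2 * e (n + 1) * (hfun (n + 1) + 1) - e n * hfun n)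
    (n : ℕ) : e (n + 1) = (eValues n).1 ∧ e (n + 2) = (eValues n).2 := by
  induction n with
  | zero =>
    have h := hrec 0
    norm_num [hfun, h1] at h
    norm_num [eValues, h1]
    linarith
  | succ n ih =>
    rcases hab : eValues n with ⟨a, b⟩
    rw [hab] at ih
    obtain ⟨ha, hb⟩ := ih
    simp only [eValues, hab]
    refine ⟨hb, ?_⟩
    push_cast
    rw [eq_div_iff (hfun_succ_pos _).ne', ← ha, ← hb]
    exact hrec (n + 1)

theorem linear_growth_upper_general (e : ℕ → ℝ) (h1 : e 1 = 1)
    (hrec : ∀ x : ℕ, 1 ≤ x →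
      e (x + 1) * (hfun (x + 1) : ℝ) =
        2 * e x * ((hfun x : ℝ) + 1) - e (x - 1) * (hfun (x - 1) : ℝ)) :
    ∃ c : ℝ, c < 1 / 2 ∧
      Filter.Tendsto (fun x : ℕ => e x / (x : ℝ)) Filter.atTop (nhds c) := by
  have hrec' : ∀ n, e (n + 2) * hfun (n + 2) =
      2 * e (n + 1) * (hfun (n + 1) + 1) - e n * hfun n :=
    fun n ↦ hrec (n + 1) (Nat.le_add_left 1 n)
  have he : ∀ n, 0 < e (n + 1) :=
    pos_of_recurrence hrec' (fun n ↦ Nat.cast_nonneg _) (h1 ▸ one_pos) (by norm_num [hfun, h1])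
  have hanti : Antitone fun n ↦ e (n + 1) / supersolution (n + 1) := by
    refine antitone_div_of_supersolution (w := fun n ↦ (hfun n : ℝ)) hrec' hfun_succ_pos he
      supersolution_pos supersolution_rec_le ?_
    norm_num [(eq_eValues h1 hrec' 0).2, h1, supersolution, eValues]
  have hbdd : BddBelow (Set.range fun n ↦ e (n + 1) / supersolution (n + 1)) :=
    ⟨0, by rintro _ ⟨n, rfl⟩; exact (div_pos (he n) (supersolution_pos n)).le⟩
  refine ⟨_, (ciInf_le hbdd 18).trans_lt ?_, ?_⟩
  · norm_num [(eq_eValues h1 hrec' 18).1, supersolution, eValues, hfun]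
  · have hlim := (tendsto_add_atTop_iff_nat (f := fun n ↦ e n / supersolution n) 1).1
      (tendsto_atTop_ciInf hanti hbdd)
    have hprod := hlim.mul tendsto_supersolution_div_self
    rw [mul_one] at hprod
    refine hprod.congr' ?_
    filter_upwards [eventually_ne_atTop 0] with n hn
    obtain ⟨k, rfl⟩ := Nat.exists_eq_succ_of_ne_zero hn
    exact div_mul_div_cancel₀ (supersolution_pos k).ne'

theorem linear_growth_upper (e : ℕ → ℝ) (h0 : e 0 = 1) (h1 : e 1 = 1)
    (hrec : ∀ x : ℕ, 1 ≤ x →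
      e (x + 1) * (hfun (x + 1) : ℝ) =
        2 * e x * ((hfun x : ℝ) + 1) - e (x - 1) * (hfun (x - 1) : ℝ)) :
    ∃ c : ℝ, c < 1 / 2 ∧
      Filter.Tendsto (fun x : ℕ => e x / (x : ℝ)) Filter.atTop (nhds c) :=
  linear_growth_upper_general e h1 hrec

end Stmt15
end

section
/- Let h(x) = ⌊(x+1)²/3⌋ and let e : ℕ → ℝ be defined by e(0) = e(1) = 1 and, for x ≥ 1, e(x+1)·h(x+1) = 2·e(x)·(h(x)+1) − e(x−1)·h(x−1). If e(x)/x → c as x → ∞, then c > 0. -/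
/-!
With `h x = ⌊(x+1)²/3⌋`, the sequence `e : ℕ → ℝ` defined by `e 0 = e 1 = 1` and
`e(x+1)·h(x+1) = 2·e(x)·(h(x)+1) - e(x-1)·h(x-1)` for `x ≥ 1` satisfies:
if `e(x)/x → c`, then `c > 0`.
-/

namespace Stmt16

/-- `h x = ⌊(x+1)²/3⌋`. -/
def hfun (x : ℕ) : ℕ := (x + 1) ^ 2 / 3

theorem linear_growth_lower (e : ℕ → ℝ) (h0 : e 0 = 1) (h1 : e 1 = 1)
    (hrec : ∀ x : ℕ, 1 ≤ x →
      e (x + 1) * (hfun (x + 1) : ℝ) =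
        2 * e x * ((hfun x : ℝ) + 1) - e (x - 1) * (hfun (x - 1) : ℝ))
    (c : ℝ)
    (hc : Filter.Tendsto (fun x : ℕ => e x / (x : ℝ)) Filter.atTop (nhds c)) :
    0 < c := by
  set F : ℕ → ℝ := fun n => e n * (hfun n : ℝ) with hF
  have key : ∀ n : ℕ, 1 ≤ n →
      e n ≥ (n : ℝ)/10 + 1/5 ∧
      F n ≥ (n : ℝ) + ((n:ℝ)^3 - (n:ℝ))/30 + (n:ℝ)*((n:ℝ)-1)/5 ∧
      F n - F (n-1) ≥ 1 + (n:ℝ)*((n:ℝ)-1)/10 + 2*((n:ℝ)-1)/5 := by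
    intro n hn
    induction n, hn using Nat.le_induction with
    | base =>
      have hf0 : hfun 0 = 0 := by norm_num [hfun]
      have hf1 : hfun 1 = 1 := by norm_num [hfun]
      refine ⟨by rw [h1]; norm_num, ?_, ?_⟩ <;>
        simp [hF, hf0, hf1, h0, h1] <;> norm_num
    | succ n hn ih =>
      obtain ⟨he, hFn, hD⟩ := ih
      have hr := hrec n hn
      have hrecF : F (n+1) = 2*F n - F (n-1) + 2*e n := by
        simp only [hF]
        rw [hr]; ring
      have hD' : F (n+1) - F n ≥ 1 + ((n:ℝ)+1)*(n:ℝ)/10 + 2*(n:ℝ)/5 := by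
        have heq : F (n+1) - F n = (F n - F (n-1)) + 2*e n := by rw [hrecF]; ring
        rw [heq]; nlinarith [hD, he]
      have hFn' : F (n+1) ≥ ((n:ℝ)+1) + (((n:ℝ)+1)^3 - ((n:ℝ)+1))/30
          + ((n:ℝ)+1)*(n:ℝ)/5 := by nlinarith [hFn, hD']
      have hHpos : (1:ℝ) ≤ (hfun (n+1) : ℝ) := by
        have : 1 ≤ hfun (n+1) := by
          simp only [hfun]
          rw [Nat.one_le_div_iff (by norm_num)]
          nlinarith
        exact_mod_cast this
      have hHle : 3*(hfun (n+1):ℝ) ≤ ((n:ℝ)+2)^2 := by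
        have h3 : 3 * hfun (n+1) ≤ (n+2)^2 := by
          rw [mul_comm]
          exact Nat.div_mul_le_self _ _
        calc 3*(hfun (n+1):ℝ) = ((3 * hfun (n+1) : ℕ) : ℝ) := by push_cast; ring
          _ ≤ (((n+2)^2 : ℕ) : ℝ) := by exact_mod_cast h3
          _ = ((n:ℝ)+2)^2 := by push_cast; ring
      have htpos : (0:ℝ) < ((n:ℝ)+1)/10 + 1/5 := by positivity
      have hmain : (((n:ℝ)+1)/10 + 1/5) * (3*(hfun (n+1):ℝ)) ≤
          e (n+1) * (3*(hfun (n+1):ℝ)) := by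
        have h1' : (((n:ℝ)+1)/10 + 1/5) * (3*(hfun (n+1):ℝ)) ≤
            (((n:ℝ)+1)/10 + 1/5) * ((n:ℝ)+2)^2 :=
          mul_le_mul_of_nonneg_left hHle htpos.le
        have h2' : (((n:ℝ)+1)/10 + 1/5) * ((n:ℝ)+2)^2 ≤ 3 * F (n+1) := by
          have hnn : (0:ℝ) ≤ (n:ℝ) := Nat.cast_nonneg n
          nlinarith [hFn', sq_nonneg (n:ℝ)]
        have h3' : 3 * F (n+1) = e (n+1) * (3*(hfun (n+1):ℝ)) := by
          simp only [hF]; ring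
        linarith
      have he' : ((n:ℝ)+1)/10 + 1/5 ≤ e (n+1) :=
        le_of_mul_le_mul_right hmain (by linarith)
      refine ⟨?_, ?_, ?_⟩
      · push_cast; linarith [he']
      · push_cast; linarith [hFn']
      · have : (n + 1) - 1 = n := rfl
        rw [this]; push_cast; linarith [hD']
  have hub : ∀ᶠ x : ℕ in Filter.atTop, (1/10 : ℝ) ≤ e x / x := by
    filter_upwards [Filter.eventually_ge_atTop 1] with x hx
    have hxpos : (0:ℝ) < (x:ℝ) := by exact_mod_cast hx
    have hex := (key x hx).1
    rw [le_div_iff₀ hxpos]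
    nlinarith
  have hc10 : (1/10 : ℝ) ≤ c := ge_of_tendsto hc hub
  linarith

end Stmt16
end

section
/- Let h(x) = ⌊(x+1)²/3⌋ and let e : ℕ → ℝ be defined by e(0) = e(1) = 1 and, for x ≥ 1, e(x+1)·h(x+1) = 2·e(x)·(h(x)+1) − e(x−1)·h(x−1). Then the sequence x ↦ e(x)/x is strictly decreasing on x ≥ 1: for all x ≥ 1, e(x+1)/(x+1) < e(x)/x. -/
/-!
With `h x = ⌊(x+1)²/3⌋`, the sequence `e : ℕ → ℝ` defined by `e 0 = e 1 = 1` and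
`e(x+1)·h(x+1) = 2·e(x)·(h(x)+1) - e(x-1)·h(x-1)` for `x ≥ 1` has `e(x)/x`
strictly decreasing on `x ≥ 1`.
-/

namespace Stmt17


/-- `h x = ⌊(x+1)²/3⌋`. -/
def hfun (x : ℕ) : ℕ := (x + 1) ^ 2 / 3


lemma hfun_eq0 (m : ℕ) : hfun (3*m) = 3*m^2+2*m := by
  have h : (3*m+1)^2 = 3*(3*m^2+2*m)+1 := by ring
  simp only [hfun, h]
  set k := 3*m^2+2*m; omega

lemma hfun_eq1 (m : ℕ) : hfun (3*m+1) = 3*m^2+4*m+1 := by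
  have h : (3*m+1+1)^2 = 3*(3*m^2+4*m+1)+1 := by ring
  simp only [hfun, h]
  set k := 3*m^2+4*m+1; omega

lemma hfun_eq2 (m : ℕ) : hfun (3*m+2) = 3*m^2+6*m+3 := by
  have h : (3*m+2+1)^2 = 3*(3*m^2+6*m+3) := by ring
  simp only [hfun, h]
  set k := 3*m^2+6*m+3; omega

lemma hfun_eq3 (m : ℕ) : hfun (3*m+3) = 3*m^2+8*m+5 := by
  have h : (3*m+3+1)^2 = 3*(3*m^2+8*m+5)+1 := by ring
  simp only [hfun, h]
  set k := 3*m^2+8*m+5; omega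

lemma hfun_eq4 (m : ℕ) : hfun (3*m+4) = 3*m^2+10*m+8 := by
  have h : (3*m+4+1)^2 = 3*(3*m^2+10*m+8)+1 := by ring
  simp only [hfun, h]
  set k := 3*m^2+10*m+8; omega

lemma hfun_pos (x : ℕ) : 1 ≤ hfun (x+1) := by
  have h : 2^2 ≤ (x+1+1)^2 := Nat.pow_le_pow_left (by omega) 2
  have h' : 3 ≤ (x+1+1)^2 := by omega
  simp only [hfun]
  omega

lemma keystep (E' E E2 hm h0 h1 y Pp Pc : ℝ)
    (hy : 0 < y) (hE : 0 ≤ E) (hhm : 0 ≤ hm) (hh1 : 0 < h1)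
    (hQ : 0 < 9*(y-1)^4*y - Pp)
    (hr : E2 * h1 = 2*E*(h0+1) - E'*hm)
    (H : Pp*E' ≤ 9*(y-1)^4*(y*E' - (y-1)*E))
    (hCL : Pc*(h1*(9*(y-1)^4*y - Pp)) ≤
      9*y^4*(((y+1)*h1 - 2*y*(h0+1) + (y-1)*hm)*(9*(y-1)^4*y - Pp) + hm*(y-1)*Pp)) :
    Pc*E ≤ 9*y^4*((y+1)*E - y*E2) := by
  have t : y*(Pp*E') ≤ y*(9*(y-1)^4*(y*E' - (y-1)*E)) := mul_le_mul_of_nonneg_left H hy.le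
  have hQd : Pp*((y-1)*E) ≤ (9*(y-1)^4*y - Pp)*(y*E' - (y-1)*E) := by nlinarith [t]
  have t2 : hm*(Pp*((y-1)*E)) ≤ hm*((9*(y-1)^4*y - Pp)*(y*E' - (y-1)*E)) :=
    mul_le_mul_of_nonneg_left hQd hhm
  have t4 : (9*y^4)*(hm*(Pp*((y-1)*E))) ≤
      (9*y^4)*(hm*((9*(y-1)^4*y - Pp)*(y*E' - (y-1)*E))) :=
    mul_le_mul_of_nonneg_left t2 (by positivity)
  have t3 : (Pc*(h1*(9*(y-1)^4*y - Pp)))*E ≤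
      (9*y^4*(((y+1)*h1 - 2*y*(h0+1) + (y-1)*hm)*(9*(y-1)^4*y - Pp) + hm*(y-1)*Pp))*E :=
    mul_le_mul_of_nonneg_right hCL hE
  have hid : (9*y^4*(9*(y-1)^4*y - Pp))*(h1*((y+1)*E - y*E2)) =
      (9*y^4*(9*(y-1)^4*y - Pp))*((((y+1)*h1 - 2*y*(h0+1) + (y-1)*hm))*E + hm*(y*E' - (y-1)*E)) := by
    linear_combination (-(9*y^4*(9*(y-1)^4*y - Pp))*y) * hr
  have t5 : (h1*(9*(y-1)^4*y - Pp))*(Pc*E) ≤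
      (h1*(9*(y-1)^4*y - Pp))*(9*y^4*((y+1)*E - y*E2)) := by linarith [t4, t3, hid]
  exact le_of_mul_le_mul_left t5 (mul_pos hh1 hQ)



lemma step_1 (e : ℕ → ℝ)
    (hrec : ∀ x : ℕ, 1 ≤ x →
      e (x + 1) * (hfun (x + 1) : ℝ) =
        2 * e x * ((hfun x : ℝ) + 1) - e (x - 1) * (hfun (x - 1) : ℝ))
    (n : ℕ) (hE : 0 ≤ e (3*(n+5)+1))
    (H : (9*(3*((n:ℝ)+5))^3 - 3*(3*((n:ℝ)+5))^2 - 12*(3*((n:ℝ)+5)) - 872) * e (3*(n+5)) ≤ 9*(3*((n:ℝ)+5))^4*((3*((n:ℝ)+5)+1)*e (3*(n+5)) - (3*((n:ℝ)+5))*e (3*(n+5)+1))) :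
    (18*(3*((n:ℝ)+5)+1)^3 - 30*(3*((n:ℝ)+5)+1)^2 + 33*(3*((n:ℝ)+5)+1) - 905) * e (3*(n+5)+1) ≤ 9*(3*((n:ℝ)+5)+1)^4*((3*((n:ℝ)+5)+1+1)*e (3*(n+5)+1) - (3*((n:ℝ)+5)+1)*e (3*(n+5)+2)) := by
  have pn : (0:ℝ) ≤ (n:ℝ) := Nat.cast_nonneg n
  have p2 : (0:ℝ) ≤ (n:ℝ)^2 := by positivity
  have p3 : (0:ℝ) ≤ (n:ℝ)^3 := by positivity
  have p4 : (0:ℝ) ≤ (n:ℝ)^4 := by positivity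
  have p5 : (0:ℝ) ≤ (n:ℝ)^5 := by positivity
  have p6 : (0:ℝ) ≤ (n:ℝ)^6 := by positivity
  have hR := hrec (3*(n+5)+1) (by omega)
  rw [show 3*(n+5)+1 + 1 = 3*(n+5)+2 by omega, show 3*(n+5)+1 - 1 = 3*(n+5) by omega] at hR
  rw [hfun_eq2, hfun_eq1, hfun_eq0] at hR
  push_cast at hR
  have key := keystep (e (3*(n+5))) (e (3*(n+5)+1)) (e (3*(n+5)+2))
      (3*((n:ℝ)+5)^2+2*((n:ℝ)+5)) (3*((n:ℝ)+5)^2+4*((n:ℝ)+5)+1) (3*((n:ℝ)+5)^2+6*((n:ℝ)+5)+3) (3*(((n:ℝ)+5))+1)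
      (9*((3*(((n:ℝ)+5))+1)-1)^3 - 3*((3*(((n:ℝ)+5))+1)-1)^2 - 12*((3*(((n:ℝ)+5))+1)-1) - 872) (18*(3*(((n:ℝ)+5))+1)^3 - 30*(3*(((n:ℝ)+5))+1)^2 + 33*(3*(((n:ℝ)+5))+1) - 905)
      (by positivity) hE (by positivity) (by positivity)
      (by nlinarith [pn, p2, p3, p4, p5, p6])
      (by linear_combination hR)
      (by nlinarith [H])
      (by nlinarith [pn, p2, p3, p4, p5, p6])
  nlinarith [key]


lemma step_2 (e : ℕ → ℝ)
    (hrec : ∀ x : ℕ, 1 ≤ x →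
      e (x + 1) * (hfun (x + 1) : ℝ) =
        2 * e x * ((hfun x : ℝ) + 1) - e (x - 1) * (hfun (x - 1) : ℝ))
    (n : ℕ) (hE : 0 ≤ e (3*(n+5)+2))
    (H : (18*(3*((n:ℝ)+5)+1)^3 - 30*(3*((n:ℝ)+5)+1)^2 + 33*(3*((n:ℝ)+5)+1) - 905) * e (3*(n+5)+1) ≤ 9*(3*((n:ℝ)+5)+1)^4*((3*((n:ℝ)+5)+1+1)*e (3*(n+5)+1) - (3*((n:ℝ)+5)+1)*e (3*(n+5)+2))) :
    (6*(3*((n:ℝ)+5)+2)^2 - 3*(3*((n:ℝ)+5)+2) - 929) * e (3*(n+5)+2) ≤ 9*(3*((n:ℝ)+5)+2)^4*((3*((n:ℝ)+5)+2+1)*e (3*(n+5)+2) - (3*((n:ℝ)+5)+2)*e (3*(n+5)+3)) := by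
  have pn : (0:ℝ) ≤ (n:ℝ) := Nat.cast_nonneg n
  have p2 : (0:ℝ) ≤ (n:ℝ)^2 := by positivity
  have p3 : (0:ℝ) ≤ (n:ℝ)^3 := by positivity
  have p4 : (0:ℝ) ≤ (n:ℝ)^4 := by positivity
  have p5 : (0:ℝ) ≤ (n:ℝ)^5 := by positivity
  have p6 : (0:ℝ) ≤ (n:ℝ)^6 := by positivity
  have hR := hrec (3*(n+5)+2) (by omega)
  rw [show 3*(n+5)+2 + 1 = 3*(n+5)+3 by omega, show 3*(n+5)+2 - 1 = 3*(n+5)+1 by omega] at hR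
  rw [hfun_eq3, hfun_eq2, hfun_eq1] at hR
  push_cast at hR
  have key := keystep (e (3*(n+5)+1)) (e (3*(n+5)+2)) (e (3*(n+5)+3))
      (3*((n:ℝ)+5)^2+4*((n:ℝ)+5)+1) (3*((n:ℝ)+5)^2+6*((n:ℝ)+5)+3) (3*((n:ℝ)+5)^2+8*((n:ℝ)+5)+5) (3*(((n:ℝ)+5))+2)
      (18*((3*(((n:ℝ)+5))+2)-1)^3 - 30*((3*(((n:ℝ)+5))+2)-1)^2 + 33*((3*(((n:ℝ)+5))+2)-1) - 905) (6*(3*(((n:ℝ)+5))+2)^2 - 3*(3*(((n:ℝ)+5))+2) - 929)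
      (by positivity) hE (by positivity) (by positivity)
      (by nlinarith [pn, p2, p3, p4, p5, p6])
      (by linear_combination hR)
      (by nlinarith [H])
      (by nlinarith [pn, p2, p3, p4, p5, p6])
  nlinarith [key]


lemma step_3 (e : ℕ → ℝ)
    (hrec : ∀ x : ℕ, 1 ≤ x →
      e (x + 1) * (hfun (x + 1) : ℝ) =
        2 * e x * ((hfun x : ℝ) + 1) - e (x - 1) * (hfun (x - 1) : ℝ))
    (n : ℕ) (hE : 0 ≤ e (3*(n+5)+3))
    (H : (6*(3*((n:ℝ)+5)+2)^2 - 3*(3*((n:ℝ)+5)+2) - 929) * e (3*(n+5)+2) ≤ 9*(3*((n:ℝ)+5)+2)^4*((3*((n:ℝ)+5)+2+1)*e (3*(n+5)+2) - (3*((n:ℝ)+5)+2)*e (3*(n+5)+3))) :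
    (9*(3*((n:ℝ)+5)+3)^3 - 3*(3*((n:ℝ)+5)+3)^2 - 12*(3*((n:ℝ)+5)+3) - 872) * e (3*(n+5)+3) ≤ 9*(3*((n:ℝ)+5)+3)^4*((3*((n:ℝ)+5)+3+1)*e (3*(n+5)+3) - (3*((n:ℝ)+5)+3)*e (3*(n+5)+4)) := by
  have pn : (0:ℝ) ≤ (n:ℝ) := Nat.cast_nonneg n
  have p2 : (0:ℝ) ≤ (n:ℝ)^2 := by positivity
  have p3 : (0:ℝ) ≤ (n:ℝ)^3 := by positivity
  have p4 : (0:ℝ) ≤ (n:ℝ)^4 := by positivity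
  have p5 : (0:ℝ) ≤ (n:ℝ)^5 := by positivity
  have p6 : (0:ℝ) ≤ (n:ℝ)^6 := by positivity
  have hR := hrec (3*(n+5)+3) (by omega)
  rw [show 3*(n+5)+3 + 1 = 3*(n+5)+4 by omega, show 3*(n+5)+3 - 1 = 3*(n+5)+2 by omega] at hR
  rw [hfun_eq4, hfun_eq3, hfun_eq2] at hR
  push_cast at hR
  have key := keystep (e (3*(n+5)+2)) (e (3*(n+5)+3)) (e (3*(n+5)+4))
      (3*((n:ℝ)+5)^2+6*((n:ℝ)+5)+3) (3*((n:ℝ)+5)^2+8*((n:ℝ)+5)+5) (3*((n:ℝ)+5)^2+10*((n:ℝ)+5)+8) (3*(((n:ℝ)+5))+3)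
      (6*((3*(((n:ℝ)+5))+3)-1)^2 - 3*((3*(((n:ℝ)+5))+3)-1) - 929) (9*(3*(((n:ℝ)+5))+3)^3 - 3*(3*(((n:ℝ)+5))+3)^2 - 12*(3*(((n:ℝ)+5))+3) - 872)
      (by positivity) hE (by positivity) (by positivity)
      (by nlinarith [pn, p2, p3, p4, p5, p6])
      (by linear_combination hR)
      (by nlinarith [H])
      (by nlinarith [pn, p2, p3, p4, p5, p6])
  nlinarith [key]

lemma e_pos (e : ℕ → ℝ) (h0 : e 0 = 1) (h1 : e 1 = 1)
    (hrec : ∀ x : ℕ, 1 ≤ x →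
      e (x + 1) * (hfun (x + 1) : ℝ) =
        2 * e x * ((hfun x : ℝ) + 1) - e (x - 1) * (hfun (x - 1) : ℝ)) :
    ∀ x : ℕ, 1 ≤ x → 0 < e x := by
  have aux : ∀ x : ℕ, 1 ≤ x → 0 < e x ∧ 0 ≤ e (x-1) * (hfun (x-1) : ℝ) ∧
      e (x-1) * (hfun (x-1) : ℝ) < e x * (hfun x : ℝ) := by
    intro x hx
    induction x, hx using Nat.le_induction with
    | base => norm_num [hfun, h0, h1]
    | succ x hx IH =>
      obtain ⟨hex, hu0, hud⟩ := IH
      have hR := hrec x hx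
      have hfx : (0:ℝ) < (hfun (x+1) : ℝ) := by
        exact_mod_cast (hfun_pos x : 0 < hfun (x+1))
      have hpos : 0 < e (x+1) * (hfun (x+1) : ℝ) := by nlinarith [hR, hex, hu0, hud]
      have hex1 : 0 < e (x+1) := by
        rcases mul_pos_iff.mp hpos with ⟨ha, _⟩ | ⟨_, hb⟩
        · exact ha
        · linarith
      refine ⟨hex1, ?_, ?_⟩
      · simp only [Nat.add_sub_cancel]
        nlinarith [hu0, hud]
      · simp only [Nat.add_sub_cancel]
        nlinarith [hR, hex, hu0, hud]
  exact fun x hx => (aux x hx).1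

set_option maxHeartbeats 2000000 in
theorem ratio_strict_decreasing (e : ℕ → ℝ) (h0 : e 0 = 1) (h1 : e 1 = 1)
    (hrec : ∀ x : ℕ, 1 ≤ x →
      e (x + 1) * (hfun (x + 1) : ℝ) =
        2 * e x * ((hfun x : ℝ) + 1) - e (x - 1) * (hfun (x - 1) : ℝ)) :
    ∀ x : ℕ, 1 ≤ x → e (x + 1) / ((x : ℝ) + 1) < e x / (x : ℝ) := by
  have he2 : e 2 = 4/3 := by
    have h := hrec 1 (by norm_num)
    norm_num [hfun, h1, h0] at h
    linarith
  have he3 : e 3 = 29/15 := by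
    have h := hrec 2 (by norm_num)
    norm_num [hfun, he2, h1] at h
    linarith
  have he4 : e 4 = 12/5 := by
    have h := hrec 3 (by norm_num)
    norm_num [hfun, he3, he2] at h
    linarith
  have he5 : e 5 = 503/180 := by
    have h := hrec 4 (by norm_num)
    norm_num [hfun, he4, he3] at h
    linarith
  have he6 : e 6 = 4811/1440 := by
    have h := hrec 5 (by norm_num)
    norm_num [hfun, he5, he4] at h
    linarith
  have he7 : e 7 = 57643/15120 := by
    have h := hrec 6 (by norm_num)
    norm_num [hfun, he6, he5] at h
    linarith
  have he8 : e 8 = 432011/102060 := by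
    have h := hrec 7 (by norm_num)
    norm_num [hfun, he7, he6] at h
    linarith
  have he9 : e 9 = 9155269/1924560 := by
    have h := hrec 8 (by norm_num)
    norm_num [hfun, he8, he7] at h
    linarith
  have he10 : e 10 = 70455521/13471920 := by
    have h := hrec 9 (by norm_num)
    norm_num [hfun, he9, he8] at h
    linarith
  have he11 : e 11 = 3662485583/646652160 := by
    have h := hrec 10 (by norm_num)
    norm_num [hfun, he10, he9] at h
    linarith
  have he12 : e 12 = 10165863037/1646023680 := by
    have h := hrec 11 (by norm_num)
    norm_num [hfun, he11, he10] at h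
    linarith
  have he13 : e 13 = 1304268604141/196151155200 := by
    have h := hrec 12 (by norm_num)
    norm_num [hfun, he12, he11] at h
    linarith
  have he14 : e 14 = 3556474877717/501522840000 := by
    have h := hrec 13 (by norm_num)
    norm_num [hfun, he13, he12] at h
    linarith
  have he15 : e 15 = 28496479628780467/3751390843200000 := by
    have h := hrec 14 (by norm_num)
    norm_num [hfun, he14, he13] at h
    linarith
  have he16 : e 16 = 726553022437750831/90033380236800000 := by
    have h := hrec 15 (by norm_num)
    norm_num [hfun, he15, he14] at h
    linarith
  have epos := e_pos e h0 h1 hrec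
  have main : ∀ n : ℕ, (9*(3*((n:ℝ)+5))^3 - 3*(3*((n:ℝ)+5))^2 - 12*(3*((n:ℝ)+5)) - 872) * e (3*(n+5)) ≤ 9*(3*((n:ℝ)+5))^4*((3*((n:ℝ)+5)+1)*e (3*(n+5)) - (3*((n:ℝ)+5))*e (3*(n+5)+1)) := by
    intro n
    induction n with
    | zero => norm_num [he15, he16]
    | succ n IH =>
      have s1 := step_1 e hrec n (epos _ (by omega)).le IH
      have s2 := step_2 e hrec n (epos _ (by omega)).le s1
      have s3 := step_3 e hrec n (epos _ (by omega)).le s2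
      rw [show 3*(n+1+5) = 3*(n+5)+3 by omega]
      rw [show 3*(n+5)+3+1 = 3*(n+5)+4 by omega]
      push_cast
      push_cast at s3
      nlinarith [s3]
  intro x hx
  by_cases hb : x ≤ 14
  · interval_cases x <;>
      norm_num [h1, he2, he3, he4, he5, he6, he7, he8, he9, he10, he11, he12, he13, he14, he15]
  · have hx15 : 15 ≤ x := by omega
    obtain ⟨m, hm⟩ : ∃ m, x = 3*m ∨ x = 3*m+1 ∨ x = 3*m+2 := ⟨x/3, by omega⟩
    have hm5 : 5 ≤ m := by omega
    obtain ⟨n, rfl⟩ : ∃ n, m = n+5 := ⟨m-5, by omega⟩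
    have pn : (0:ℝ) ≤ (n:ℝ) := Nat.cast_nonneg n
    have p2 : (0:ℝ) ≤ (n:ℝ)^2 := by positivity
    have p3 : (0:ℝ) ≤ (n:ℝ)^3 := by positivity
    rcases hm with h | h | h <;> subst h
    · have inv := main n
      have hex : 0 < e (3*(n+5)) := epos _ (by omega)
      have hPc : (0:ℝ) < 9*(3*((n:ℝ)+5))^3 - 3*(3*((n:ℝ)+5))^2 - 12*(3*((n:ℝ)+5)) - 872 := by
        nlinarith [pn, p2, p3]
      have h9 : (0:ℝ) < 9*(3*((n:ℝ)+5))^4 := by positivity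
      have hD : 0 < (3*((n:ℝ)+5)+1)*e (3*(n+5)) - (3*((n:ℝ)+5))*e (3*(n+5)+1) := by
        nlinarith [inv, mul_pos hPc hex, h9]
      have hxp : (0:ℝ) < ((3*(n+5):ℕ):ℝ) := by exact_mod_cast (by omega : 0 < 3*(n+5))
      rw [div_lt_div_iff₀ (by linarith) hxp]
      push_cast
      nlinarith [hD]
    · have inv := step_1 e hrec n (epos _ (by omega)).le (main n)
      have hex : 0 < e (3*(n+5)+1) := epos _ (by omega)
      have hPc : (0:ℝ) < 18*(3*((n:ℝ)+5)+1)^3 - 30*(3*((n:ℝ)+5)+1)^2 + 33*(3*((n:ℝ)+5)+1) - 905 := by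
        nlinarith [pn, p2, p3]
      have h9 : (0:ℝ) < 9*(3*((n:ℝ)+5)+1)^4 := by positivity
      have hD : 0 < (3*((n:ℝ)+5)+1+1)*e (3*(n+5)+1) - (3*((n:ℝ)+5)+1)*e (3*(n+5)+2) := by
        nlinarith [inv, mul_pos hPc hex, h9]
      have hxp : (0:ℝ) < ((3*(n+5)+1:ℕ):ℝ) := by exact_mod_cast (by omega : 0 < 3*(n+5)+1)
      rw [div_lt_div_iff₀ (by linarith) hxp]
      push_cast
      nlinarith [hD]
    · have inv := step_2 e hrec n (epos _ (by omega)).le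
        (step_1 e hrec n (epos _ (by omega)).le (main n))
      have hex : 0 < e (3*(n+5)+2) := epos _ (by omega)
      have hPc : (0:ℝ) < 6*(3*((n:ℝ)+5)+2)^2 - 3*(3*((n:ℝ)+5)+2) - 929 := by
        nlinarith [pn, p2, p3]
      have h9 : (0:ℝ) < 9*(3*((n:ℝ)+5)+2)^4 := by positivity
      have hD : 0 < (3*((n:ℝ)+5)+2+1)*e (3*(n+5)+2) - (3*((n:ℝ)+5)+2)*e (3*(n+5)+3) := by
        nlinarith [inv, mul_pos hPc hex, h9]
      have hxp : (0:ℝ) < ((3*(n+5)+2:ℕ):ℝ) := by exact_mod_cast (by omega : 0 < 3*(n+5)+2)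
      rw [div_lt_div_iff₀ (by linarith) hxp]
      push_cast
      nlinarith [hD]

end Stmt17
end

section
/- Let h(x) = ⌊(x+1)²/3⌋ and let e : ℕ → ℝ be defined by e(0) = e(1) = 1 and, for x ≥ 1, e(x+1)·h(x+1) = 2·e(x)·(h(x)+1) − e(x−1)·h(x−1). Then e(x) > 0 for all x ∈ ℕ. -/
/-!
With `h x = ⌊(x+1)²/3⌋`, the sequence `e : ℕ → ℝ` defined by `e 0 = e 1 = 1` and
`e(x+1)·h(x+1) = 2·e(x)·(h(x)+1) - e(x-1)·h(x-1)` for `x ≥ 1` is positive.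
-/

namespace Stmt18

/-- `h x = ⌊(x+1)²/3⌋`. -/
def hfun (x : ℕ) : ℕ := (x + 1) ^ 2 / 3

theorem e_pos (e : ℕ → ℝ) (h0 : e 0 = 1) (h1 : e 1 = 1)
    (hrec : ∀ x : ℕ, 1 ≤ x →
      e (x + 1) * (hfun (x + 1) : ℝ) =
        2 * e x * ((hfun x : ℝ) + 1) - e (x - 1) * (hfun (x - 1) : ℝ)) :
    ∀ x : ℕ, 0 < e x := by
  have key : ∀ x : ℕ, 0 < e x ∧ 0 ≤ e x * (hfun x : ℝ) ∧
      e x * (hfun x : ℝ) < e (x + 1) * (hfun (x + 1) : ℝ) := by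
    intro x
    induction x with
    | zero => norm_num [hfun, h0, h1]
    | succ n ih =>
      obtain ⟨hpos, hnn, hlt⟩ := ih
      have hhn : 1 ≤ hfun (n + 1) := by
        rw [hfun, Nat.le_div_iff_mul_le (by norm_num)]
        have : (n + 1 + 1) ^ 2 = n * n + 4 * n + 4 := by ring
        omega
      have hh : (1 : ℝ) ≤ (hfun (n + 1) : ℝ) := by exact_mod_cast hhn
      have hf1 : 0 < e (n + 1) * (hfun (n + 1) : ℝ) := lt_of_le_of_lt hnn hlt
      have he1 : 0 < e (n + 1) := by nlinarith
      have hr := hrec (n + 1) (by omega)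
      simp only [Nat.add_sub_cancel] at hr
      exact ⟨he1, le_of_lt hf1, by nlinarith⟩
  exact fun x => (key x).1

end Stmt18
end
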